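/- arXiv:1607.07197 — 12 statements merged into one kernel-verified Lean document; each statement's English description precedes it below -/
import Mathlib

section
/- Let S ⊆ X × Y where X, Y are countable subsets of ℝ₊, and suppose the WEP holds for S: every function f : S → ℝ can be written f(x,y) = φ(x) + h(x)(y - x) - ψ(y) on S for some functions φ, h : S_X → ℝ and ψ : S_Y → ℝ. Then for any two distinct points x₁, x₂ ∈ S_X, the intersection Y(x₁) ∩ Y(x₂) has at most 2 elements, where Y(x) = {y ∈ Y : (x,y) ∈ S}. -/
open Set

/-- Projection of `S` onto the first coordinate. -/
def SX (S : Set (ℝ × ℝ)) : Set ℝ := Prod.fst '' S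

/-- Projection of `S` onto the second coordinate. -/
def SY (S : Set (ℝ × ℝ)) : Set ℝ := Prod.snd '' S

/-- The fiber `Y(x) = {y : (x,y) ∈ S}`. -/
def Yfib (S : Set (ℝ × ℝ)) (x : ℝ) : Set ℝ := {y | (x, y) ∈ S}

/-- The fiber `X(y) = {x : (x,y) ∈ S}`. -/
def Xfib (S : Set (ℝ × ℝ)) (y : ℝ) : Set ℝ := {x | (x, y) ∈ S}

/-- The weak exact predictable representation property (WEP) for `S`:
every function decomposes as `f(x,y) = φ(x) + h(x)(y-x) - ψ(y)` on `S`. -/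
def WEP (S : Set (ℝ × ℝ)) : Prop :=
  ∀ f : ℝ × ℝ → ℝ, ∃ φ h ψ : ℝ → ℝ,
    ∀ p ∈ S, f p = φ p.1 + h p.1 * (p.2 - p.1) - ψ p.2

/-- A set has at most two elements. -/
def AtMostTwo (A : Set ℝ) : Prop := ∀ a ∈ A, ∀ b ∈ A, ∀ c ∈ A, a = b ∨ a = c ∨ b = c

/-- `S` is 1-erased: every point of `S_X` has at least two image points. -/
def OneErased (S : Set (ℝ × ℝ)) : Prop :=
  ∀ x ∈ SX S, ∃ y₁ y₂ : ℝ, y₁ ≠ y₂ ∧ (x, y₁) ∈ S ∧ (x, y₂) ∈ S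

/-- `ψ` is `S`-affine: affine on every fiber `Y(x)`. -/
def SAffine (S : Set (ℝ × ℝ)) (ψ : ℝ → ℝ) : Prop :=
  ∀ x ∈ SX S, ∃ a b : ℝ, ∀ y ∈ Yfib S x, ψ y = a + b * (y - x)

/-- `A` is a 2-net: it is 1-erased and every `A`-affine function is globally affine. -/
def TwoNet (A : Set (ℝ × ℝ)) : Prop :=
  OneErased A ∧ ∀ ψ : ℝ → ℝ, SAffine A ψ → ∃ α β : ℝ, ∀ y ∈ SY A, ψ y = α + β * y

/-- Two paths are neighbours if they share a coordinate. -/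
def Neighbour (p q : ℝ × ℝ) : Prop := p.1 = q.1 ∨ p.2 = q.2

/-- Transitive (reflexive-transitive) closure of the neighbour relation within `S`. -/
def Linked (S : Set (ℝ × ℝ)) (p q : ℝ × ℝ) : Prop :=
  Relation.ReflTransGen (fun a b => a ∈ S ∧ b ∈ S ∧ Neighbour a b) p q

/-- The 2-link property: some (injective) enumeration of `S_X` such that every new
point shares at most two image points with the union of previous images. -/
def TwoLinkProperty (S : Set (ℝ × ℝ)) : Prop :=
  ∃ (N : Set ℕ) (x : ℕ → ℝ), Set.InjOn x N ∧ x '' N = SX S ∧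
    ∀ n ∈ N, AtMostTwo (Yfib S (x n) ∩ ⋃ i ∈ {i ∈ N | i < n}, Yfib S (x i))

/-- The erasure map removing paths `(x,y)` with `|X(y)| = 1`. -/
def E1x (T : Set (ℝ × ℝ)) : Set (ℝ × ℝ) := T \ {p | p ∈ T ∧ Xfib T p.2 = {p.1}}

/-- The erasure map removing paths `(x,y)` with `|Y(x)| = 1`. -/
def E1y (T : Set (ℝ × ℝ)) : Set (ℝ × ℝ) := T \ {p | p ∈ T ∧ Yfib T p.1 = {p.2}}

/-- The erasure map removing paths `(x,y)` with `|Y(x)| = 2`. -/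
def E2y (T : Set (ℝ × ℝ)) : Set (ℝ × ℝ) :=
  T \ {p | p ∈ T ∧ ∃ a b : ℝ, a ≠ b ∧ Yfib T p.1 = {a, b}}

/-- The composite erasure map `E = E_{2,y} ∘ E_{1,y} ∘ E_{1,x}`. -/
def Erase (T : Set (ℝ × ℝ)) : Set (ℝ × ℝ) := E2y (E1y (E1x T))

/-- `S` is fully erasable: every path is eventually erased. -/
def FullyErasable (S : Set (ℝ × ℝ)) : Prop :=
  ∀ p ∈ S, ∃ n : ℕ, p ∉ Erase^[n] S

/-- `A` is saturated in `S`: every path of `S` with both endpoints in the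
projections of `A` belongs to `A`. -/
def SaturatedIn (A S : Set (ℝ × ℝ)) : Prop :=
  ∀ p ∈ S, p.1 ∈ SX A → p.2 ∈ SY A → p ∈ A

/-- An `S`-maximal 2-net. -/
def MaximalTwoNet (S A : Set (ℝ × ℝ)) : Prop :=
  TwoNet A ∧ A ⊆ S ∧ ∀ A' : Set (ℝ × ℝ), TwoNet A' → A' ⊆ S → A ⊆ A' → A' = A

/-- Intersection lemma under the WEP: any two distinct points of `S_X` have at most
two common image points. -/
theorem intersection_lemma_WEP
    (X Y : Set ℝ) (hX : X.Countable) (hY : Y.Countable)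
    (hXpos : ∀ x ∈ X, 0 < x) (hYpos : ∀ y ∈ Y, 0 < y)
    (S : Set (ℝ × ℝ)) (hS : S ⊆ X ×ˢ Y)
    (hwep : WEP S)
    (x₁ x₂ : ℝ) (hx₁ : x₁ ∈ SX S) (hx₂ : x₂ ∈ SX S) (hne : x₁ ≠ x₂) :
    AtMostTwo (Yfib S x₁ ∩ Yfib S x₂) := by
  intro a ha b hb c hc
  by_contra hcon
  push_neg at hcon
  obtain ⟨hab, hac, hbc⟩ := hcon
  obtain ⟨φ, h, ψ, hdec⟩ := hwep (fun p => if p = (x₂, c) then 1 else 0)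
  have E1 := hdec (x₁, a) ha.1
  have E2 := hdec (x₁, b) hb.1
  have E3 := hdec (x₁, c) hc.1
  have E4 := hdec (x₂, a) ha.2
  have E5 := hdec (x₂, b) hb.2
  have E6 := hdec (x₂, c) hc.2
  simp only [Prod.mk.injEq, hne, hac, hbc, false_and, and_false, if_false,
    and_self, if_true] at E1 E2 E3 E4 E5 E6
  norm_num at E6
  have hD : (h x₁ - h x₂) * (a - b) = 0 := by ring_nf; nlinarith [E1, E2, E4, E5]
  have hD0 : h x₁ - h x₂ = 0 := by
    rcases mul_eq_zero.1 hD with h0 | h0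
    · exact h0
    · exact absurd (by linarith) hab
  have hD1 : (h x₁ - h x₂) * (a - c) = 1 := by ring_nf; nlinarith [E1, E3, E4, E6]
  rw [hD0, zero_mul] at hD1
  exact one_ne_zero hD1.symm
end

section
/- Suppose S ⊆ X × Y satisfies the 2-link property: there exists an enumeration S_X = (xₙ)ₙ≥1 such that for all n ≥ 1, |Y(xₙ) ∩ ⋃_{i=1}^{n-1} Y(xᵢ)| ≤ 2 (with the convention that the empty union is empty). Then the WEP holds for S: every function f : S → ℝ admits a decomposition f(x,y) = φ(x) + h(x)(y-x) - ψ(y) on S. -/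
open Set

/-- On a set with at most two elements, any function can be matched by an affine one. -/
theorem affine_fit (K : Set ℝ) (v : ℝ → ℝ) :
    ∃ p : ℝ × ℝ, AtMostTwo K → ∀ y ∈ K, p.1 + p.2 * y = v y := by
  classical
  by_cases h2 : ∃ y₁ ∈ K, ∃ y₂ ∈ K, y₁ ≠ y₂
  · obtain ⟨y₁, hy₁, y₂, hy₂, hne⟩ := h2
    refine ⟨(v y₁ - (v y₁ - v y₂) / (y₁ - y₂) * y₁, (v y₁ - v y₂) / (y₁ - y₂)), ?_⟩
    intro hK y hy
    rcases hK y hy y₁ hy₁ y₂ hy₂ with rfl | rfl | h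
    · ring
    · have hsub : y₁ - y ≠ 0 := sub_ne_zero.mpr hne
      field_simp
      ring
    · exact absurd h hne
  · push_neg at h2
    rcases Set.eq_empty_or_nonempty K with rfl | ⟨y₀, hy₀⟩
    · exact ⟨(0, 0), fun _ y hy => absurd hy (Set.notMem_empty y)⟩
    · refine ⟨(v y₀, 0), fun _ y hy => ?_⟩
      rw [h2 y hy y₀ hy₀]; ring

/-- Recursively chosen affine fits. -/
noncomputable def fitSeq (K : ℕ → Set ℝ) (g : ℕ → ℝ → ℝ) (idx : ℝ → ℕ) : ℕ → ℝ × ℝ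
  | n =>
    Classical.choose (affine_fit (K n) (fun y =>
      if h : idx y < n then
        g n y + (fitSeq K g idx (idx y)).1 + (fitSeq K g idx (idx y)).2 * y - g (idx y) y
      else 0))
  termination_by n => n
  decreasing_by all_goals exact h

theorem fitSeq_spec (K : ℕ → Set ℝ) (g : ℕ → ℝ → ℝ) (idx : ℝ → ℕ) (n : ℕ)
    (hK : AtMostTwo (K n)) : ∀ y ∈ K n,
      (fitSeq K g idx n).1 + (fitSeq K g idx n).2 * y =
        if h : idx y < n then
          g n y + (fitSeq K g idx (idx y)).1 + (fitSeq K g idx (idx y)).2 * y - g (idx y) y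
        else 0 := by
  have he : fitSeq K g idx n = Classical.choose (affine_fit (K n) (fun y =>
      if h : idx y < n then
        g n y + (fitSeq K g idx (idx y)).1 + (fitSeq K g idx (idx y)).2 * y - g (idx y) y
      else 0)) := by rw [fitSeq]
  rw [he]
  exact Classical.choose_spec (affine_fit (K n) _) hK

/-- The 2-link property implies the WEP. -/
theorem twoLink_implies_WEP
    (X Y : Set ℝ) (hX : X.Countable) (hY : Y.Countable)
    (hXpos : ∀ x ∈ X, 0 < x) (hYpos : ∀ y ∈ Y, 0 < y)
    (S : Set (ℝ × ℝ)) (hS : S ⊆ X ×ˢ Y)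
    (h2LP : TwoLinkProperty S) :
    WEP S := by
  classical
  intro f
  obtain ⟨N, x, hinj, himg, hAMT⟩ := h2LP
  set K : ℕ → Set ℝ := fun n => Yfib S (x n) ∩ ⋃ i ∈ {i ∈ N | i < n}, Yfib S (x i) with hKdef
  set g : ℕ → ℝ → ℝ := fun n y => f (x n, y) with hgdef
  set idx : ℝ → ℕ := fun y => sInf {i | i ∈ N ∧ y ∈ Yfib S (x i)} with hidxdef
  set C : ℕ → ℝ × ℝ := fitSeq K g idx with hCdef
  set nx : ℝ → ℕ := fun x' => sInf {n | n ∈ N ∧ x n = x'} with hnxdef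
  refine ⟨fun x' => (C (nx x')).1 + (C (nx x')).2 * x', fun x' => (C (nx x')).2,
    fun y => (C (idx y)).1 + (C (idx y)).2 * y - g (idx y) y, ?_⟩
  rintro ⟨x', y⟩ hp
  have hx' : x' ∈ SX S := ⟨(x', y), hp, rfl⟩
  obtain ⟨n₀, hn₀N, hxn₀⟩ : ∃ n, n ∈ N ∧ x n = x' := by
    rw [← himg] at hx'
    obtain ⟨n, hn, he⟩ := hx'
    exact ⟨n, hn, he⟩
  have hnmem : nx x' ∈ {n | n ∈ N ∧ x n = x'} := Nat.sInf_mem ⟨n₀, ⟨hn₀N, hxn₀⟩⟩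
  have hyfib : y ∈ Yfib S (x (nx x')) := by
    show (x (nx x'), y) ∈ S
    rw [hnmem.2]; exact hp
  have hmmem : idx y ∈ {i | i ∈ N ∧ y ∈ Yfib S (x i)} :=
    Nat.sInf_mem ⟨nx x', ⟨hnmem.1, hyfib⟩⟩
  have hmn : idx y ≤ nx x' := Nat.sInf_le ⟨hnmem.1, hyfib⟩
  show f (x', y) = ((C (nx x')).1 + (C (nx x')).2 * x') + (C (nx x')).2 * (y - x') -
      ((C (idx y)).1 + (C (idx y)).2 * y - g (idx y) y)
  rcases eq_or_lt_of_le hmn with heq | hlt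
  · rw [heq]
    have hg : g (nx x') y = f (x', y) := by
      show f (x (nx x'), y) = f (x', y)
      rw [hnmem.2]
    rw [hg]; ring
  · have hyK : y ∈ K (nx x') := by
      refine ⟨hyfib, ?_⟩
      exact Set.mem_biUnion (show idx y ∈ {i ∈ N | i < nx x'} from ⟨hmmem.1, hlt⟩) hmmem.2
    have hspec := fitSeq_spec K g idx (nx x') (hAMT (nx x') hnmem.1) y hyK
    rw [dif_pos hlt] at hspec
    have hg : g (nx x') y = f (x', y) := by
      show f (x (nx x'), y) = f (x', y)
      rw [hnmem.2]
    rw [hg] at hspec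
    linarith [hspec]
end

section
/- Let S ⊆ X × Y and let U = {(x,y) ∈ S : |X(y)| = 1 or |Y(x)| ≤ 2}, where X(y) = {t : (t,y) ∈ S} and Y(x) = {z : (x,z) ∈ S}. Then the WEP holds for S if and only if the WEP holds for S \ U. -/
open Set

/-!
A path `(x, y)` with `X(y) = {x}` is the only constraint on `ψ(y)`, so `ψ(y)` can be chosen to
fit it. Once `ψ` is fixed, a fibre `Y(x)` with at most two points only asks that
`y ↦ f(x, y) + ψ(y)` agree with an affine function on it, which is always possible; this
determines `φ(x)` and `h(x)`.
-/

def IsDecompOn (S : Set (ℝ × ℝ)) (f : ℝ × ℝ → ℝ) (φ h ψ : ℝ → ℝ) : Prop :=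
  ∀ p ∈ S, f p = φ p.1 + h p.1 * (p.2 - p.1) - ψ p.2

theorem WEP.mono {S T : Set (ℝ × ℝ)} (hTS : T ⊆ S) (hS : WEP S) : WEP T := fun f =>
  let ⟨φ, h, ψ, hd⟩ := hS f
  ⟨φ, h, ψ, fun p hp => hd p (hTS hp)⟩

theorem AtMostTwo.exists_affine {A : Set ℝ} (hA : AtMostTwo A) (g : ℝ → ℝ) (x₀ : ℝ) :
    ∃ a b : ℝ, ∀ y ∈ A, g y = a + b * (y - x₀) := by
  by_cases hpair : ∃ y₁ ∈ A, ∃ y₂ ∈ A, y₁ ≠ y₂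
  · obtain ⟨y₁, hy₁, y₂, hy₂, hne⟩ := hpair
    have hsub : y₁ - y₂ ≠ 0 := sub_ne_zero.mpr hne
    set b := (g y₁ - g y₂) / (y₁ - y₂)
    refine ⟨g y₁ - b * (y₁ - x₀), b, fun y hy => ?_⟩
    rcases hA y hy y₁ hy₁ y₂ hy₂ with rfl | rfl | hy₁₂
    · ring
    · simp only [b]
      field_simp
      ring
    · exact absurd hy₁₂ hne
  · push Not at hpair
    rcases A.eq_empty_or_nonempty with rfl | ⟨y₁, hy₁⟩
    · exact ⟨0, 0, fun y hy => hy.elim⟩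
    · exact ⟨g y₁, 0, fun y hy => by rw [hpair y hy y₁ hy₁]; ring⟩

theorem IsDecompOn.extend_xfib_singleton {S T : Set (ℝ × ℝ)} {f : ℝ × ℝ → ℝ} {φ h ψ : ℝ → ℝ}
    (hTS : T ⊆ S) (hd : IsDecompOn (T \ {p | Xfib S p.2 = {p.1}}) f φ h ψ) :
    ∃ ψ', IsDecompOn T f φ h ψ' := by
  classical
  refine ⟨fun y => if hy : ∃ x, Xfib S y = {x} then
      φ hy.choose + h hy.choose * (y - hy.choose) - f (hy.choose, y) else ψ y, ?_⟩
  rintro ⟨x, y⟩ hp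
  have hxy : x ∈ Xfib S y := hTS hp
  by_cases hy : ∃ x', Xfib S y = {x'}
  · have hx : x = hy.choose := by
      rw [hy.choose_spec] at hxy
      exact hxy
    simp only [dif_pos hy, ← hx]
    ring
  · simp only [dif_neg hy]
    exact hd _ ⟨hp, fun hlonely => hy ⟨x, hlonely⟩⟩

theorem IsDecompOn.extend_atMostTwo {S : Set (ℝ × ℝ)} {f : ℝ × ℝ → ℝ} {φ h ψ : ℝ → ℝ}
    (hd : IsDecompOn (S \ {p | AtMostTwo (Yfib S p.1)}) f φ h ψ) :
    ∃ φ' h', IsDecompOn S f φ' h' ψ := by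
  classical
  choose a b hab using fun x (hx : AtMostTwo (Yfib S x)) =>
    hx.exists_affine (fun y => f (x, y) + ψ y) x
  refine ⟨fun x => if hx : AtMostTwo (Yfib S x) then a x hx else φ x,
    fun x => if hx : AtMostTwo (Yfib S x) then b x hx else h x, ?_⟩
  rintro ⟨x, y⟩ hp
  by_cases hx : AtMostTwo (Yfib S x)
  · simp only [dif_pos hx]
    linarith [hab x hx y hp]
  · simp only [dif_neg hx]
    exact hd _ ⟨hp, hx⟩

theorem wep_iff_wep_reduced_general
    (S : Set (ℝ × ℝ))
    (U : Set (ℝ × ℝ))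
    (hU : U = {p | p ∈ S ∧ (Xfib S p.2 = {p.1} ∨ AtMostTwo (Yfib S p.1))}) :
    WEP S ↔ WEP (S \ U) := by
  refine ⟨WEP.mono sdiff_subset, fun hW f => ?_⟩
  have hSU : S \ U = (S \ {p | AtMostTwo (Yfib S p.1)}) \ {p | Xfib S p.2 = {p.1}} := by
    subst hU
    ext p
    simp only [mem_sdiff, mem_ofPred_eq]
    tauto
  obtain ⟨φ, h, ψ, hd⟩ := hW f
  rw [hSU] at hd
  obtain ⟨ψ', hd'⟩ := IsDecompOn.extend_xfib_singleton sdiff_subset hd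
  obtain ⟨φ', h', hd''⟩ := hd'.extend_atMostTwo
  exact ⟨φ', h', ψ', hd''⟩

/-- Reduction lemma: the WEP holds for `S` iff it holds for `S \\ U`. -/
theorem wep_iff_wep_reduced
    (X Y : Set ℝ) (hX : X.Countable) (hY : Y.Countable)
    (hXpos : ∀ x ∈ X, 0 < x) (hYpos : ∀ y ∈ Y, 0 < y)
    (S : Set (ℝ × ℝ)) (hS : S ⊆ X ×ˢ Y)
    (U : Set (ℝ × ℝ))
    (hU : U = {p | p ∈ S ∧ (Xfib S p.2 = {p.1} ∨ AtMostTwo (Yfib S p.1))}) :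
    WEP S ↔ WEP (S \ U) :=
  wep_iff_wep_reduced_general S U hU
end

section
/- Let S ⊆ X × Y be fully erasable, i.e. the decreasing sequence of sets Eⁿ(S) tends to the empty set as n → ∞, where E = E_{2,y} ∘ E_{1,y} ∘ E_{1,x}, E_{1,x}(T) = T \ {(x,y) ∈ T : |X_T(y)| = 1}, and E_{k,y}(T) = T \ {(x,y) ∈ T : |Y_T(x)| = k} for k = 1,2. Then the WEP holds for S. -/
open Set

namespace FEWEP
attribute [local instance] Classical.propDecidable

/-- the erasure step of `p` : least `n` with `p ∉ Erase^[n] S`. -/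
noncomputable def nstep (S : Set (ℝ × ℝ)) (p : ℝ × ℝ) : ℕ :=
  if h : ∃ n, p ∉ Erase^[n] S then Nat.find h else 0

variable {S : Set (ℝ × ℝ)} {p q : ℝ × ℝ}

lemma nstep_spec (hFE : FullyErasable S) (hp : p ∈ S) : p ∉ Erase^[nstep S p] S := by
  rw [nstep, dif_pos (hFE p hp)]
  exact Nat.find_spec (hFE p hp)

lemma mem_of_lt_nstep {k : ℕ} (hk : k < nstep S p) : p ∈ Erase^[k] S := by
  rw [nstep] at hk
  split_ifs at hk with h
  · exact not_not.mp (Nat.find_min h hk)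
  · omega

lemma nstep_le {k : ℕ} (h : p ∉ Erase^[k] S) : nstep S p ≤ k := by
  have he : ∃ n, p ∉ Erase^[n] S := ⟨k, h⟩
  rw [nstep, dif_pos he]
  exact Nat.find_le h

lemma nstep_pos (hFE : FullyErasable S) (hp : p ∈ S) : 0 < nstep S p := by
  rcases Nat.eq_zero_or_pos (nstep S p) with h | h
  · have := nstep_spec hFE hp
    rw [h, Function.iterate_zero_apply] at this
    exact absurd hp this
  · exact h


lemma E1x_subsetJ (T : Set (ℝ × ℝ)) : E1x T ⊆ T := Set.diff_subset
lemma E1y_subsetJ (T : Set (ℝ × ℝ)) : E1y T ⊆ T := Set.diff_subset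
lemma E2y_subsetJ (T : Set (ℝ × ℝ)) : E2y T ⊆ T := Set.diff_subset

/-- `p` is removed at its step by the `E1x` stage. -/
def TypeA (S : Set (ℝ × ℝ)) (p : ℝ × ℝ) : Prop :=
  p ∉ E1x (Erase^[nstep S p - 1] S)

noncomputable def muv (S : Set (ℝ × ℝ)) (p : ℝ × ℝ) : ℕ :=
  2 * nstep S p + (if TypeA S p then 0 else 1)

lemma mem_Tlev (hFE : FullyErasable S) (hp : p ∈ S) :
    p ∈ Erase^[nstep S p - 1] S :=
  mem_of_lt_nstep (by have := nstep_pos hFE hp; omega)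

lemma not_mem_next (hFE : FullyErasable S) (hp : p ∈ S) :
    p ∉ Erase (Erase^[nstep S p - 1] S) := by
  have h1 : nstep S p - 1 + 1 = nstep S p := by have := nstep_pos hFE hp; omega
  have := nstep_spec hFE hp
  rwa [← h1, Function.iterate_succ_apply'] at this

lemma typeA_fib (hFE : FullyErasable S) (hp : p ∈ S) (hA : TypeA S p) :
    Xfib (Erase^[nstep S p - 1] S) p.2 = {p.1} := by
  have hT := mem_Tlev hFE hp
  rw [TypeA, E1x] at hA
  have : p ∈ {p' | p' ∈ Erase^[nstep S p - 1] S ∧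
      Xfib (Erase^[nstep S p - 1] S) p'.2 = {p'.1}} := by
    by_contra hc
    exact hA ⟨hT, hc⟩
  exact this.2

/-- L1 : if `p` is type A, every other point of `S` in the same row has smaller step. -/
lemma typeA_row (hFE : FullyErasable S) (hp : p ∈ S) (hA : TypeA S p)
    (hq : q ∈ S) (hy : q.2 = p.2) (hne : q ≠ p) : nstep S q < nstep S p := by
  have hfib := typeA_fib hFE hp hA
  have hqT : q ∉ Erase^[nstep S p - 1] S := by
    intro hqT
    have : q.1 ∈ Xfib (Erase^[nstep S p - 1] S) p.2 := by
      rw [← hy]; exact hqT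
    rw [hfib] at this
    exact hne (Prod.ext this hy)
  have := nstep_le hqT
  have := nstep_pos hFE hp
  omega

/-- L2 : if `p` is not type A, the whole column of `p` is gone at step `nstep S p`. -/
lemma typeBC_col (hFE : FullyErasable S) (hp : p ∈ S) (hB : ¬ TypeA S p)
    (hq : q ∈ S) (hx : q.1 = p.1) : q ∉ Erase^[nstep S p] S := by
  set T : Set (ℝ × ℝ) := Erase^[nstep S p - 1] S with hT
  have hp1 : p ∈ E1x T := not_not.mp hB
  have hpN : p ∉ Erase T := not_mem_next hFE hp
  have hiter : Erase^[nstep S p] S = Erase T := by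
    have hn : nstep S p = (nstep S p - 1) + 1 := by
      have := nstep_pos hFE hp; omega
    rw [hT, ← Function.iterate_succ_apply' Erase (nstep S p - 1) S]
    congr 1
  rw [hiter]
  rw [Erase] at hpN ⊢
  set T1 := E1x T
  set T2 := E1y T1 with hT2
  by_cases h2 : p ∈ T2
  · -- E2y case
    have hcond : p ∈ {p' | p' ∈ T2 ∧ ∃ a b : ℝ, a ≠ b ∧ Yfib T2 p'.1 = {a, b}} := by
      by_contra hc
      exact hpN ⟨h2, hc⟩
    obtain ⟨-, a, b, hab, hfib⟩ := hcond
    intro hq3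
    rw [E2y] at hq3
    exact hq3.2 ⟨hq3.1, a, b, hab, by rw [hx]; exact hfib⟩
  · -- E1y case : fiber of `p.1` in `T1` is `{p.2}` , so `T2` has empty column
    have hcond : p ∈ {p' | p' ∈ T1 ∧ Yfib T1 p'.1 = {p'.2}} := by
      by_contra hc
      exact h2 ⟨hp1, hc⟩
    have hfib := hcond.2
    intro hq3
    have hq2 : q ∈ T2 := (E2y_subsetJ _) hq3
    have hq1 : q ∈ T1 := (E1y_subsetJ _) hq2
    have : q.2 ∈ Yfib T1 p.1 := by rw [← hx]; exact hq1
    rw [hfib] at this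
    have hqp : q = p := Prod.ext hx this
    rw [hqp] at hq2
    rw [hT2, E1y] at hq2
    exact hq2.2 hcond

/-- L3 : two non-type-A points in the same column have the same step. -/
lemma typeBC_eq (hFE : FullyErasable S) (hp : p ∈ S) (hBp : ¬ TypeA S p)
    (hq : q ∈ S) (hBq : ¬ TypeA S q) (hx : q.1 = p.1) : nstep S q = nstep S p :=
  le_antisymm (nstep_le (typeBC_col hFE hp hBp hq hx))
    (nstep_le (typeBC_col hFE hq hBq hp hx.symm))

/-- L4 : the non-type-A points in a column form at most a pair. -/
lemma typeBC_pair (hFE : FullyErasable S) (hp : p ∈ S) (hB : ¬ TypeA S p) :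
    ∃ y₁ y₂ : ℝ, y₁ ≠ y₂ ∧ ∀ q ∈ S, q.1 = p.1 → ¬ TypeA S q →
      (q = (p.1, y₁) ∨ q = (p.1, y₂)) := by
  set T : Set (ℝ × ℝ) := Erase^[nstep S p - 1] S with hT
  set T1 := E1x T with hT1
  set T2 := E1y T1 with hT2
  have hp1 : p ∈ E1x T := not_not.mp hB
  have hpN : p ∉ Erase T := not_mem_next hFE hp
  rw [Erase] at hpN
  have key : ∀ q ∈ S, q.1 = p.1 → ¬ TypeA S q → q ∈ T1 := by
    intro q hq hx hBq
    have hst : nstep S q = nstep S p := typeBC_eq hFE hp hB hq hBq hx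
    have := not_not.mp hBq
    rwa [hst] at this
  by_cases h2 : p ∈ T2
  · have hcond : p ∈ {p' | p' ∈ T2 ∧ ∃ a b : ℝ, a ≠ b ∧ Yfib T2 p'.1 = {a, b}} := by
      by_contra hc
      exact hpN ⟨h2, hc⟩
    obtain ⟨-, a, b, hab, hfib⟩ := hcond
    refine ⟨a, b, hab, fun q hq hx hBq => ?_⟩
    have hq1 : q ∈ T1 := key q hq hx hBq
    have hq2 : q ∈ T2 := by
      by_contra hc
      have : q ∈ {p' | p' ∈ T1 ∧ Yfib T1 p'.1 = {p'.2}} := by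
        by_contra hc2
        exact hc (by exact ⟨hq1, fun hh => hc2 hh⟩)
      have hfibq := this.2
      have : p.2 ∈ Yfib T1 q.1 := by rw [hx]; exact hp1
      rw [hfibq] at this
      have hqp : p = q := Prod.ext hx.symm this
      rw [← hqp] at hc
      exact hc h2
    have : q.2 ∈ Yfib T2 p.1 := by rw [← hx]; exact hq2
    rw [hfib] at this
    rcases this with h | h
    · exact Or.inl (Prod.ext hx h)
    · exact Or.inr (Prod.ext hx h)
  · have hcond : p ∈ {p' | p' ∈ T1 ∧ Yfib T1 p'.1 = {p'.2}} := by
      by_contra hc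
      exact h2 ⟨hp1, hc⟩
    refine ⟨p.2, p.2 + 1, by intro h; linarith, fun q hq hx hBq => Or.inl ?_⟩
    have hq1 : q ∈ T1 := key q hq hx hBq
    have : q.2 ∈ Yfib T1 p.1 := by rw [← hx]; exact hq1
    rw [hcond.2] at this
    exact Prod.ext hx this

/-- Finite solvability: every finite subsystem of the WEP equations is solvable. -/
lemma finite_solvable (hFE : FullyErasable S) (f : ℝ × ℝ → ℝ) :
    ∀ F : Finset (ℝ × ℝ), ↑F ⊆ S →
    ∃ φ h ψ : ℝ → ℝ, ∀ p ∈ F, f p = φ p.1 + h p.1 * (p.2 - p.1) - ψ p.2 := by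
  intro F
  induction F using Finset.strongInductionOn with
  | _ F IH =>
  intro hFS
  rcases Finset.eq_empty_or_nonempty F with rfl | hne
  · exact ⟨0, 0, 0, by simp⟩
  obtain ⟨p, hpF, hmin⟩ := F.exists_min_image (muv S) hne
  have hp : p ∈ S := hFS hpF
  by_cases hA : TypeA S p
  · -- type A : the row of p meets F only in p
    have hrow : ∀ q ∈ F, q ≠ p → q.2 ≠ p.2 := by
      intro q hqF hne2 hy
      have hlt := typeA_row hFE hp hA (hFS hqF) hy hne2
      have h1 := hmin q hqF
      rw [muv, muv, if_pos hA] at h1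
      have : (if TypeA S q then 0 else 1) ≤ 1 := by split <;> omega
      omega
    obtain ⟨φ, h, ψ, hsol⟩ := IH (F.erase p) (Finset.erase_ssubset hpF)
      ((Finset.coe_subset.mpr (Finset.erase_subset p F)).trans hFS)
    refine ⟨φ, h, Function.update ψ p.2 (φ p.1 + h p.1 * (p.2 - p.1) - f p), ?_⟩
    intro q hqF
    by_cases hqp : q = p
    · subst hqp
      rw [Function.update_self]
      ring
    · rw [Function.update_of_ne (hrow q hqF hqp)]
      exact hsol q (Finset.mem_erase.mpr ⟨hqp, hqF⟩)
  · -- type BC : remove the whole column of p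
    have hBCall : ∀ q ∈ F, q.1 = p.1 → ¬ TypeA S q := by
      intro q hqF hx hAq
      have hcol := typeBC_col hFE hp hA (hFS hqF) hx
      have hle := nstep_le hcol
      have h1 := hmin q hqF
      rw [muv, muv, if_neg hA, if_pos hAq] at h1
      omega
    obtain ⟨y₁, y₂, hy12, hpair⟩ := typeBC_pair hFE hp hA
    set F' := F.filter (fun q => q.1 ≠ p.1) with hF'
    have hpF' : p ∉ F' := by simp [hF']
    obtain ⟨φ, h, ψ, hsol⟩ := IH F'
      (Finset.ssubset_iff_of_subset (Finset.filter_subset _ _) |>.mpr ⟨p, hpF, hpF'⟩)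
      ((Finset.coe_subset.mpr (Finset.filter_subset _ _)).trans hFS)
    set c : ℝ → ℝ := fun y => f (p.1, y) + ψ y with hc
    set Hv : ℝ := (c y₁ - c y₂) / (y₁ - y₂) with hHv
    set Φv : ℝ := c y₁ - Hv * (y₁ - p.1) with hΦv
    refine ⟨Function.update φ p.1 Φv, Function.update h p.1 Hv, ψ, ?_⟩
    intro q hqF
    by_cases hx : q.1 = p.1
    · have hq := hpair q (hFS hqF) hx (hBCall q hqF hx)
      have hy12' : y₁ - y₂ ≠ 0 := sub_ne_zero.mpr hy12
      rcases hq with rfl | rfl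
      · simp only [Function.update_self]
        have : Φv + Hv * (y₁ - p.1) = c y₁ := by rw [hΦv]; ring
        rw [hc] at this
        simp only at this ⊢
        linarith [this]
      · simp only [Function.update_self]
        have hH : Hv * (y₂ - y₁) = -(c y₁ - c y₂) := by
          rw [hHv]
          field_simp
          ring
        have : Φv + Hv * (y₂ - p.1) = c y₂ := by
          have : Φv + Hv * (y₂ - p.1) = c y₁ + Hv * (y₂ - y₁) := by rw [hΦv]; ring
          rw [this, hH]; ring
        rw [hc] at this
        simp only at this ⊢
        linarith [this]
    · rw [Function.update_of_ne hx, Function.update_of_ne hx]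
      exact hsol q (Finset.mem_filter.mpr ⟨hqF, hx⟩)

end FEWEP

namespace FEWEP2

/-- antitone sequences of naturals are eventually constant -/
lemma antitone_eventually {g : ℕ → ℕ} (hg : ∀ ⦃m m'⦄, m ≤ m' → g m' ≤ g m) :
    ∃ N, ∀ m, N ≤ m → g m = g N := by
  obtain ⟨v, hv⟩ : ∃ v, g 0 ≤ v := ⟨g 0, le_rfl⟩
  induction v generalizing g with
  | zero =>
    exact ⟨0, fun m hm => by have := hg (Nat.zero_le m); omega⟩
  | succ v ih =>
    by_cases hc : ∀ m, g m = g 0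
    · exact ⟨0, fun m _ => by rw [hc m]⟩
    · push_neg at hc
      obtain ⟨m, hm⟩ := hc
      have hlt : g m < g 0 := lt_of_le_of_ne (hg (Nat.zero_le m)) hm
      obtain ⟨N, hN⟩ := ih (g := fun j => g (m + j))
        (fun a b hab => hg (by omega)) (by simp; omega)
      refine ⟨m + N, fun m' hm' => ?_⟩
      have h1 := hN (m' - m) (by omega)
      rw [show m + (m' - m) = m' by omega] at h1
      exact h1

abbrev K : Type := (ℝ ⊕ ℝ) ⊕ (ℝ ⊕ Unit)

noncomputable instance : DecidableEq K := Classical.decEq K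

def φc (x : ℝ) : K := Sum.inl (Sum.inl x)
def hc (x : ℝ) : K := Sum.inl (Sum.inr x)
def ψc (y : ℝ) : K := Sum.inr (Sum.inl y)
def tc : K := Sum.inr (Sum.inr ())

/-- The linear functional of the equation attached to a path `p`. -/
noncomputable def Leq (f : ℝ × ℝ → ℝ) (p : ℝ × ℝ) : (K → ℝ) →ₗ[ℝ] ℝ :=
  (LinearMap.proj (φc p.1) : (K → ℝ) →ₗ[ℝ] ℝ)
    + (p.2 - p.1) • (LinearMap.proj (hc p.1) : (K → ℝ) →ₗ[ℝ] ℝ)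
    - (LinearMap.proj (ψc p.2) : (K → ℝ) →ₗ[ℝ] ℝ)
    - (f p) • (LinearMap.proj tc : (K → ℝ) →ₗ[ℝ] ℝ)

/-- coordinate sets -/
noncomputable def Cset (s : ℕ → ℝ × ℝ) (n : ℕ) : Finset K :=
  insert tc ((Finset.range n).biUnion
    (fun k => {φc (s k).1, hc (s k).1, ψc (s k).2}))

lemma Cset_mono (s : ℕ → ℝ × ℝ) {n n' : ℕ} (hnn : n ≤ n') : Cset s n ⊆ Cset s n' := by
  apply Finset.insert_subset_insert
  apply Finset.biUnion_subset_biUnion_of_subset_left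
  exact Finset.range_subset_range.mpr hnn

lemma tc_mem_Cset (s : ℕ → ℝ × ℝ) (n : ℕ) : tc ∈ Cset s n := Finset.mem_insert_self _ _

noncomputable def πmap (s : ℕ → ℝ × ℝ) (n : ℕ) : (K → ℝ) →ₗ[ℝ] (↥(Cset s n) → ℝ) :=
  LinearMap.funLeft ℝ ℝ (fun v => (v : K))

noncomputable def ρmap (s : ℕ → ℝ × ℝ) (n : ℕ) :
    (↥(Cset s (n+1)) → ℝ) →ₗ[ℝ] (↥(Cset s n) → ℝ) :=
  LinearMap.funLeft ℝ ℝ (fun v => ⟨v.1, Cset_mono s (Nat.le_succ n) v.2⟩)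

lemma πρ (s : ℕ → ℝ × ℝ) (n : ℕ) : πmap s n = (ρmap s n).comp (πmap s (n+1)) := rfl

lemma Leq_apply (f : ℝ × ℝ → ℝ) (p : ℝ × ℝ) (u : K → ℝ) :
    Leq f p u = u (φc p.1) + (p.2 - p.1) * u (hc p.1) - u (ψc p.2) - f p * u tc := by
  simp [Leq, LinearMap.sub_apply, LinearMap.add_apply, LinearMap.smul_apply, LinearMap.proj_apply,
    smul_eq_mul]

set_option maxHeartbeats 1000000 in
set_option synthInstance.maxHeartbeats 200000 in
/-- A countable system of WEP equations that is finitely solvable is solvable. -/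
lemma solvable_of_finitely_solvable (f : ℝ × ℝ → ℝ) (s : ℕ → ℝ × ℝ)
    (hfin : ∀ m : ℕ, ∃ φ h ψ : ℝ → ℝ, ∀ k < m,
      f (s k) = φ (s k).1 + h (s k).1 * ((s k).2 - (s k).1) - ψ (s k).2) :
    ∃ φ h ψ : ℝ → ℝ, ∀ k : ℕ,
      f (s k) = φ (s k).1 + h (s k).1 * ((s k).2 - (s k).1) - ψ (s k).2 := by
  classical
  set Ksub : ℕ → Submodule ℝ (K → ℝ) :=
    fun m => ⨅ k ∈ Finset.range m, LinearMap.ker (Leq f (s k)) with hKsub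
  have hKmem : ∀ m u, u ∈ Ksub m ↔ ∀ k < m, Leq f (s k) u = 0 := by
    intro m u
    simp [hKsub, Submodule.mem_iInf, LinearMap.mem_ker]
  have hKanti : ∀ {m m' : ℕ}, m ≤ m' → Ksub m' ≤ Ksub m := by
    intro m m' hmm u hu
    rw [hKmem] at hu ⊢
    exact fun k hk => hu k (lt_of_lt_of_le hk hmm)
  have hKne : ∀ m, ∃ u ∈ Ksub m, u tc = 1 := by
    intro m
    obtain ⟨φ, h, ψ, hsol⟩ := hfin m
    refine ⟨fun v => Sum.elim (Sum.elim φ h) (Sum.elim ψ (fun _ => 1)) v, ?_, rfl⟩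
    rw [hKmem]
    intro k hk
    rw [Leq_apply]
    have := hsol k hk
    simp only [φc, hc, ψc, tc, Sum.elim_inl, Sum.elim_inr]
    linarith
  set B : ∀ n : ℕ, ℕ → Submodule ℝ (↥(Cset s n) → ℝ) :=
    fun n m => Submodule.map (πmap s n) (Ksub m) with hB
  have hBanti : ∀ n : ℕ, ∀ {m m' : ℕ}, m ≤ m' → B n m' ≤ B n m := by
    intro n m m' hm
    exact Submodule.map_mono (hKanti hm)
  have hstab : ∀ n, ∃ N, ∀ m, N ≤ m → B n m = B n N := by
    intro n
    haveI : FiniteDimensional ℝ (↥(Cset s n) → ℝ) := by infer_instance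
    obtain ⟨N, hN⟩ := antitone_eventually
      (g := fun m => Module.finrank ℝ (B n m))
      (fun m m' hmm => Submodule.finrank_mono (hBanti n hmm))
    exact ⟨N, fun m hm =>
      Submodule.eq_of_le_of_finrank_le (hBanti n hm) (le_of_eq (hN m hm).symm)⟩
  choose M hM using hstab
  set Binf : ∀ n : ℕ, Submodule ℝ (↥(Cset s n) → ℝ) := fun n => B n (M n) with hBinf
  have hρmap : ∀ n, Submodule.map (ρmap s n) (Binf (n+1)) = Binf n := by
    intro n
    have h1 : Binf (n+1) = B (n+1) (max (M n) (M (n+1))) :=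
      (hM (n+1) _ (le_max_right _ _)).symm
    have h2 : Binf n = B n (max (M n) (M (n+1))) :=
      (hM n _ (le_max_left _ _)).symm
    rw [h1, h2, hB]
    simp only
    rw [← Submodule.map_comp, ← πρ s n]
  have hsurj : ∀ n (b : ↥(Cset s n) → ℝ), b ∈ Binf n → b ⟨tc, tc_mem_Cset s n⟩ = 1 →
      ∃ v, (v ∈ Binf (n+1) ∧ v ⟨tc, tc_mem_Cset s (n+1)⟩ = 1) ∧ ρmap s n v = b := by
    intro n b hb ht
    rw [← hρmap n] at hb
    obtain ⟨v, hv, hvb⟩ := hb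
    refine ⟨v, ⟨hv, ?_⟩, hvb⟩
    have h3 : (ρmap s n v) ⟨tc, tc_mem_Cset s n⟩ = v ⟨tc, tc_mem_Cset s (n+1)⟩ := rfl
    rw [hvb] at h3
    rw [← h3, ht]
  have hw0 : ∃ b : ↥(Cset s 0) → ℝ, b ∈ Binf 0 ∧ b ⟨tc, tc_mem_Cset s 0⟩ = 1 := by
    obtain ⟨u, hu, hut⟩ := hKne (M 0)
    exact ⟨πmap s 0 u, ⟨u, hu, rfl⟩, hut⟩
  obtain ⟨w, hwmem, hwt, hwcomp⟩ :
      ∃ w : ∀ n : ℕ, ↥(Cset s n) → ℝ, (∀ n, w n ∈ Binf n) ∧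
        (∀ n, w n ⟨tc, tc_mem_Cset s n⟩ = 1) ∧ (∀ n, ρmap s n (w (n+1)) = w n) := by
    let step : ∀ n, {b : ↥(Cset s n) → ℝ // b ∈ Binf n ∧ b ⟨tc, tc_mem_Cset s n⟩ = 1} →
        {b : ↥(Cset s (n+1)) → ℝ // b ∈ Binf (n+1) ∧ b ⟨tc, tc_mem_Cset s (n+1)⟩ = 1} :=
      fun n b => ⟨(hsurj n b.1 b.2.1 b.2.2).choose,
        (hsurj n b.1 b.2.1 b.2.2).choose_spec.1⟩
    let w' : ∀ n, {b : ↥(Cset s n) → ℝ // b ∈ Binf n ∧ b ⟨tc, tc_mem_Cset s n⟩ = 1} :=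
      fun n => Nat.rec ⟨hw0.choose, hw0.choose_spec⟩ step n
    refine ⟨fun n => (w' n).1, fun n => (w' n).2.1, fun n => (w' n).2.2, fun n => ?_⟩
    exact (hsurj n (w' n).1 (w' n).2.1 (w' n).2.2).choose_spec.2
  have hagree : ∀ n m (hnm : n ≤ m) (v : K) (hv : v ∈ Cset s n),
      w m ⟨v, Cset_mono s hnm hv⟩ = w n ⟨v, hv⟩ := by
    intro n m hnm
    induction m, hnm using Nat.le_induction with
    | base => intro v hv; rfl
    | succ m hnm ih =>
      intro v hv
      have h1 : (ρmap s m (w (m+1))) ⟨v, Cset_mono s hnm hv⟩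
          = w (m+1) ⟨v, Cset_mono s (by omega) hv⟩ := rfl
      rw [← h1, hwcomp m]
      exact ih v hv
  set u : K → ℝ := fun v => if hv : ∃ n, v ∈ Cset s n then
    w (Nat.find hv) ⟨v, Nat.find_spec hv⟩ else 0 with hu
  have huC : ∀ n (v : K) (hv : v ∈ Cset s n), u v = w n ⟨v, hv⟩ := by
    intro n v hv
    have hex : ∃ n, v ∈ Cset s n := ⟨n, hv⟩
    rw [hu]
    simp only [dif_pos hex]
    have hfind : Nat.find hex ≤ n := Nat.find_le hv
    have := hagree (Nat.find hex) n hfind v (Nat.find_spec hex)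
    rw [← this]
  have hut : u tc = 1 := by rw [huC 0 tc (tc_mem_Cset s 0)]; exact hwt 0
  have hsolve : ∀ k : ℕ, Leq f (s k) u = 0 := by
    intro k
    set m₀ : ℕ := max (M (k+1)) (k+1) with hm₀
    have h1 : Binf (k+1) = B (k+1) m₀ := (hM (k+1) m₀ (le_max_left _ _)).symm
    have h2 : w (k+1) ∈ B (k+1) m₀ := h1 ▸ hwmem (k+1)
    rw [hB] at h2
    simp only [Submodule.mem_map] at h2
    obtain ⟨uh, huh, huhw⟩ := h2
    have hker : Leq f (s k) uh = 0 := (hKmem m₀ uh).mp huh k (by omega)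
    have hcoords : ∀ (v : K) (hv : v ∈ Cset s (k+1)), u v = uh v := by
      intro v hv
      have h3 : (πmap s (k+1) uh) ⟨v, hv⟩ = uh v := rfl
      rw [huC (k+1) v hv, ← huhw]
      exact h3
    have hmem1 : φc (s k).1 ∈ Cset s (k+1) := by
      apply Finset.mem_insert_of_mem
      refine Finset.mem_biUnion.mpr ⟨k, Finset.mem_range.mpr (by omega), ?_⟩
      simp
    have hmem2 : hc (s k).1 ∈ Cset s (k+1) := by
      apply Finset.mem_insert_of_mem
      refine Finset.mem_biUnion.mpr ⟨k, Finset.mem_range.mpr (by omega), ?_⟩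
      simp
    have hmem3 : ψc (s k).2 ∈ Cset s (k+1) := by
      apply Finset.mem_insert_of_mem
      refine Finset.mem_biUnion.mpr ⟨k, Finset.mem_range.mpr (by omega), ?_⟩
      simp
    rw [Leq_apply] at hker ⊢
    rw [hcoords _ hmem1, hcoords _ hmem2, hcoords _ hmem3,
      show u tc = uh tc from hcoords _ (tc_mem_Cset s (k+1))]
    exact hker
  refine ⟨fun x => u (φc x), fun x => u (hc x), fun y => u (ψc y), fun k => ?_⟩
  have := hsolve k
  rw [Leq_apply, hut] at this
  linarith

end FEWEP2

/-- If `S` is fully erasable then the WEP holds for `S`. -/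
theorem fullyErasable_implies_WEP
    (X Y : Set ℝ) (hX : X.Countable) (hY : Y.Countable)
    (hXpos : ∀ x ∈ X, 0 < x) (hYpos : ∀ y ∈ Y, 0 < y)
    (S : Set (ℝ × ℝ)) (hS : S ⊆ X ×ˢ Y)
    (hFE : FullyErasable S) :
    WEP S := by
  intro f
  rcases S.eq_empty_or_nonempty with rfl | hne
  · exact ⟨0, 0, 0, by simp⟩
  have hcount : S.Countable := (hX.prod hY).mono hS
  obtain ⟨s, hs⟩ := hcount.exists_eq_range hne
  have hrange : ∀ k : ℕ, s k ∈ S := by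
    intro k
    rw [hs]
    exact ⟨k, rfl⟩
  have hfin : ∀ m : ℕ, ∃ φ h ψ : ℝ → ℝ, ∀ k < m,
      f (s k) = φ (s k).1 + h (s k).1 * ((s k).2 - (s k).1) - ψ (s k).2 := by
    intro m
    obtain ⟨φ, h, ψ, hsol⟩ := FEWEP.finite_solvable hFE f ((Finset.range m).image s)
      (by
        intro p hp
        simp only [Finset.coe_image, Finset.coe_range, Set.mem_image] at hp
        obtain ⟨k, -, rfl⟩ := hp
        exact hrange k)
    exact ⟨φ, h, ψ, fun k hk => hsol (s k)
      (Finset.mem_image_of_mem s (Finset.mem_range.mpr hk))⟩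
  obtain ⟨φ, h, ψ, hall⟩ := FEWEP2.solvable_of_finitely_solvable f s hfin
  refine ⟨φ, h, ψ, fun p hp => ?_⟩
  rw [hs] at hp
  obtain ⟨k, rfl⟩ := hp
  exact hall k
end

section
/- Every 2-net A ⊆ X × Y is connected: any two paths in A are related by the transitive closure of the neighbour relation (sharing the first or second coordinate). -/
open Set

/-- Every 2-net is connected. -/
theorem twoNet_connected
    (X Y : Set ℝ) (hX : X.Countable) (hY : Y.Countable)
    (hXpos : ∀ x ∈ X, 0 < x) (hYpos : ∀ y ∈ Y, 0 < y)
    (A : Set (ℝ × ℝ)) (hA : A ⊆ X ×ˢ Y)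
    (hAnet : TwoNet A) :
    ∀ p ∈ A, ∀ q ∈ A, Linked A p q := by
  classical
  intro p hp q hq
  by_contra hnl
  have hsymm : Symmetric (fun a b : ℝ × ℝ => a ∈ A ∧ b ∈ A ∧ Neighbour a b) := by
    rintro a b ⟨ha, hb, hn⟩
    refine ⟨hb, ha, ?_⟩
    rcases hn with h | h
    · exact Or.inl h.symm
    · exact Or.inr h.symm
  have symmLinked : ∀ a b, Linked A a b → Linked A b a := by
    intro a b h
    induction h with
    | refl => exact Relation.ReflTransGen.refl
    | tail _ hstep ih => exact Relation.ReflTransGen.head (hsymm hstep) ih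
  set ψ : ℝ → ℝ :=
    fun y => if ∃ x, (x, y) ∈ A ∧ Linked A (x, y) p then 1 else 0 with hψdef
  have haff : SAffine A ψ := by
    intro x hx
    obtain ⟨p0, hp0, hp0x⟩ := hx
    refine ⟨ψ p0.2, 0, ?_⟩
    intro y hy
    have hyA : (x, y) ∈ A := hy
    have hp0A : (x, p0.2) ∈ A := by
      have : p0 = (x, p0.2) := by rw [← hp0x]
      rwa [← this]
    have key : (∃ x', (x', y) ∈ A ∧ Linked A (x', y) p) ↔
        (∃ x', (x', p0.2) ∈ A ∧ Linked A (x', p0.2) p) := by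
      constructor
      · rintro ⟨x', hx'A, hlink⟩
        refine ⟨x, hp0A, ?_⟩
        exact Relation.ReflTransGen.head ⟨hp0A, hyA, Or.inl rfl⟩
          (Relation.ReflTransGen.head ⟨hyA, hx'A, Or.inr rfl⟩ hlink)
      · rintro ⟨x', hx'A, hlink⟩
        refine ⟨x, hyA, ?_⟩
        exact Relation.ReflTransGen.head ⟨hyA, hp0A, Or.inl rfl⟩
          (Relation.ReflTransGen.head ⟨hp0A, hx'A, Or.inr rfl⟩ hlink)
    simp only [hψdef, key, mul_zero, zero_mul]
    ring
  obtain ⟨α, β, hg⟩ := hAnet.2 ψ haff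
  -- fiber at p.1: ψ = 1 at two distinct points
  obtain ⟨y₁, y₂, hy12, hy1A, hy2A⟩ := hAnet.1 p.1 ⟨p, hp, rfl⟩
  have hψ1 : ∀ y, (p.1, y) ∈ A → ψ y = 1 := by
    intro y hyA
    have : ∃ x, (x, y) ∈ A ∧ Linked A (x, y) p :=
      ⟨p.1, hyA, Relation.ReflTransGen.single ⟨hyA, hp, Or.inl rfl⟩⟩
    simp [hψdef, this]
  have e1 : (1 : ℝ) = α + β * y₁ := by rw [← hψ1 y₁ hy1A]; exact hg y₁ ⟨(p.1, y₁), hy1A, rfl⟩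
  have e2 : (1 : ℝ) = α + β * y₂ := by rw [← hψ1 y₂ hy2A]; exact hg y₂ ⟨(p.1, y₂), hy2A, rfl⟩
  have hβ : β = 0 := by
    have : β * (y₁ - y₂) = 0 := by linarith
    rcases mul_eq_zero.mp this with h | h
    · exact h
    · exact absurd (by linarith : y₁ = y₂) hy12
  have hα : α = 1 := by rw [hβ] at e1; linarith
  -- fiber at q.1: ψ = 0
  obtain ⟨z₁, z₂, hz12, hz1A, hz2A⟩ := hAnet.1 q.1 ⟨q, hq, rfl⟩
  have hψ0 : ψ z₁ = 0 := by
    have hne : ¬ ∃ x, (x, z₁) ∈ A ∧ Linked A (x, z₁) p := by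
      rintro ⟨x', hx'A, hlink⟩
      apply hnl
      apply symmLinked
      exact Relation.ReflTransGen.head ⟨hq, hz1A, Or.inl rfl⟩
        (Relation.ReflTransGen.head ⟨hz1A, hx'A, Or.inr rfl⟩ hlink)
    simp [hψdef, hne]
  have e3 : (0 : ℝ) = α + β * z₁ := by
    rw [← hψ0]; exact hg z₁ ⟨(q.1, z₁), hz1A, rfl⟩
  rw [hβ, hα] at e3
  linarith
end

section
/- Let A and B be two distinct S-maximal 2-nets contained in S ⊆ X × Y. Then A_X ∩ B_X = ∅ and |A_Y ∩ B_Y| ≤ 1. -/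
open Set

lemma affine_eq_of_two {α β a b y₁ y₂ : ℝ} (hne : y₁ ≠ y₂)
    (h1 : α + β * y₁ = a + b * y₁) (h2 : α + β * y₂ = a + b * y₂) :
    α = a ∧ β = b := by
  have hsub : (β - b) * (y₁ - y₂) = 0 := by ring_nf; nlinarith
  have hy : y₁ - y₂ ≠ 0 := sub_ne_zero.mpr hne
  have hβ : β = b := by
    rcases mul_eq_zero.mp hsub with h | h
    · linarith
    · exact absurd h hy
  subst hβ; exact ⟨by linarith, rfl⟩

lemma mem_SY_of_mem {A : Set (ℝ × ℝ)} {x y : ℝ} (h : (x, y) ∈ A) : y ∈ SY A :=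
  ⟨(x, y), h, rfl⟩

lemma mem_SX_of_mem {A : Set (ℝ × ℝ)} {x y : ℝ} (h : (x, y) ∈ A) : x ∈ SX A :=
  ⟨(x, y), h, rfl⟩

lemma sAffine_mono {A B : Set (ℝ × ℝ)} {ψ : ℝ → ℝ} (hAB : A ⊆ B)
    (h : SAffine B ψ) : SAffine A ψ := by
  intro x hx
  obtain ⟨p, hp, hpx⟩ := hx
  obtain ⟨a, b, hab⟩ := h x ⟨p, hAB hp, hpx⟩
  exact ⟨a, b, fun y hy => hab y (hAB hy)⟩

lemma oneErased_union {A B : Set (ℝ × ℝ)} (hA : OneErased A) (hB : OneErased B) :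
    OneErased (A ∪ B) := by
  intro x hx
  obtain ⟨p, hp, hpx⟩ := hx
  rcases hp with hp | hp
  · obtain ⟨y₁, y₂, hne, h1, h2⟩ := hA x ⟨p, hp, hpx⟩
    exact ⟨y₁, y₂, hne, Or.inl h1, Or.inl h2⟩
  · obtain ⟨y₁, y₂, hne, h1, h2⟩ := hB x ⟨p, hp, hpx⟩
    exact ⟨y₁, y₂, hne, Or.inr h1, Or.inr h2⟩

lemma SY_union {A B : Set (ℝ × ℝ)} : SY (A ∪ B) = SY A ∪ SY B :=
  image_union _ _ _

/-- Union of two 2-nets sharing an x-point is a 2-net. -/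
lemma union_twoNet_x {A B : Set (ℝ × ℝ)} (hA : TwoNet A) (hB : TwoNet B)
    {x₀ : ℝ} (hxA : x₀ ∈ SX A) (hxB : x₀ ∈ SX B) : TwoNet (A ∪ B) := by
  refine ⟨oneErased_union hA.1 hB.1, fun ψ hψ => ?_⟩
  obtain ⟨αA, βA, haffA⟩ := hA.2 ψ (sAffine_mono subset_union_left hψ)
  obtain ⟨αB, βB, haffB⟩ := hB.2 ψ (sAffine_mono subset_union_right hψ)
  obtain ⟨p, hp, hpx⟩ := hxA
  obtain ⟨a, b, hab⟩ := hψ x₀ ⟨p, Or.inl hp, hpx⟩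
  -- coefficients for A
  obtain ⟨y₁, y₂, hne, h1, h2⟩ := hA.1 x₀ ⟨p, hp, hpx⟩
  have e1 : αA + βA * y₁ = (a - b * x₀) + b * y₁ := by
    linarith [hab y₁ (Or.inl h1), haffA y₁ (mem_SY_of_mem h1)]
  have e2 : αA + βA * y₂ = (a - b * x₀) + b * y₂ := by
    linarith [hab y₂ (Or.inl h2), haffA y₂ (mem_SY_of_mem h2)]
  obtain ⟨hαA, hβA⟩ := affine_eq_of_two hne e1 e2
  -- coefficients for B
  obtain ⟨q, hq, hqx⟩ := hxB
  obtain ⟨z₁, z₂, hzne, g1, g2⟩ := hB.1 x₀ ⟨q, hq, hqx⟩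
  have f1 : αB + βB * z₁ = (a - b * x₀) + b * z₁ := by
    linarith [hab z₁ (Or.inr g1), haffB z₁ (mem_SY_of_mem g1)]
  have f2 : αB + βB * z₂ = (a - b * x₀) + b * z₂ := by
    linarith [hab z₂ (Or.inr g2), haffB z₂ (mem_SY_of_mem g2)]
  obtain ⟨hαB, hβB⟩ := affine_eq_of_two hzne f1 f2
  refine ⟨a - b * x₀, b, fun y hy => ?_⟩
  rw [SY_union] at hy
  rcases hy with hy | hy
  · rw [haffA y hy, hαA, hβA]
  · rw [haffB y hy, hαB, hβB]

/-- Union of two 2-nets sharing two y-points is a 2-net. -/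
lemma union_twoNet_y {A B : Set (ℝ × ℝ)} (hA : TwoNet A) (hB : TwoNet B)
    {y₁ y₂ : ℝ} (hne : y₁ ≠ y₂)
    (h1A : y₁ ∈ SY A) (h1B : y₁ ∈ SY B) (h2A : y₂ ∈ SY A) (h2B : y₂ ∈ SY B) :
    TwoNet (A ∪ B) := by
  refine ⟨oneErased_union hA.1 hB.1, fun ψ hψ => ?_⟩
  obtain ⟨αA, βA, haffA⟩ := hA.2 ψ (sAffine_mono subset_union_left hψ)
  obtain ⟨αB, βB, haffB⟩ := hB.2 ψ (sAffine_mono subset_union_right hψ)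
  have e1 : αA + βA * y₁ = αB + βB * y₁ := by
    rw [← haffA y₁ h1A, ← haffB y₁ h1B]
  have e2 : αA + βA * y₂ = αB + βB * y₂ := by
    rw [← haffA y₂ h2A, ← haffB y₂ h2B]
  obtain ⟨hα, hβ⟩ := affine_eq_of_two hne e1 e2
  refine ⟨αA, βA, fun y hy => ?_⟩
  rw [SY_union] at hy
  rcases hy with hy | hy
  · exact haffA y hy
  · rw [haffB y hy, hα, hβ]

/-- Two distinct `S`-maximal 2-nets have disjoint `x`-projections and share at most
one `y`-point. -/
theorem maximal_twoNets_disjoint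
    (X Y : Set ℝ) (hX : X.Countable) (hY : Y.Countable)
    (hXpos : ∀ x ∈ X, 0 < x) (hYpos : ∀ y ∈ Y, 0 < y)
    (S A B : Set (ℝ × ℝ)) (hS : S ⊆ X ×ˢ Y)
    (hA : MaximalTwoNet S A) (hB : MaximalTwoNet S B) (hne : A ≠ B) :
    SX A ∩ SX B = ∅ ∧ (SY A ∩ SY B).Subsingleton := by
  have hsub : A ∪ B ⊆ S := union_subset hA.2.1 hB.2.1
  have key : ∀ U : Set (ℝ × ℝ), TwoNet U → U = A ∪ B → False := by
    intro U hU hUeq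
    subst hUeq
    have h1 : A ∪ B = A := hA.2.2 _ hU hsub subset_union_left
    have h2 : A ∪ B = B := hB.2.2 _ hU hsub subset_union_right
    exact hne (h1 ▸ h2)
  constructor
  · rw [Set.eq_empty_iff_forall_notMem]
    rintro x ⟨hxA, hxB⟩
    exact key _ (union_twoNet_x hA.1 hB.1 hxA hxB) rfl
  · rintro y₁ ⟨h1A, h1B⟩ y₂ ⟨h2A, h2B⟩
    by_contra hney
    exact key _ (union_twoNet_y hA.1 hB.1 hney h1A h1B h2A h2B) rfl
end

section
/- Let A be an S-maximal 2-net in S ⊆ X × Y and z ∈ S_X \ A_X. Then |Y_S(z) ∩ A_Y| ≤ 1. -/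
open Set

/-- A point of `S_X` outside an `S`-maximal 2-net `A` is linked to `A_Y` in at most
one point. -/
theorem maximal_twoNet_outside_point
    (X Y : Set ℝ) (hX : X.Countable) (hY : Y.Countable)
    (hXpos : ∀ x ∈ X, 0 < x) (hYpos : ∀ y ∈ Y, 0 < y)
    (S A : Set (ℝ × ℝ)) (hS : S ⊆ X ×ˢ Y)
    (hA : MaximalTwoNet S A)
    (z : ℝ) (hz : z ∈ SX S) (hznot : z ∉ SX A) :
    (Yfib S z ∩ SY A).Subsingleton := by

  intro y₁ hy₁ y₂ hy₂
  by_contra hne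
  obtain ⟨hy₁S, hy₁A⟩ := hy₁
  obtain ⟨hy₂S, hy₂A⟩ := hy₂
  obtain ⟨⟨hOE, hAff⟩, hAS, hmax⟩ := hA
  set A' : Set (ℝ × ℝ) := insert (z, y₁) (insert (z, y₂) A) with hA'def
  have hAA' : A ⊆ A' := fun p hp => Or.inr (Or.inr hp)
  have hSXA' : SX A' = insert z (insert z (SX A)) := by
    simp [SX, hA'def, Set.image_insert_eq]
  have hTN : TwoNet A' := by
    constructor
    · intro x hx
      rw [hSXA'] at hx
      rcases hx with rfl | rfl | hx
      · exact ⟨y₁, y₂, hne, Or.inl rfl, Or.inr (Or.inl rfl)⟩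
      · exact ⟨y₁, y₂, hne, Or.inl rfl, Or.inr (Or.inl rfl)⟩
      · obtain ⟨a, b, hab, ha, hb⟩ := hOE x hx
        exact ⟨a, b, hab, hAA' ha, hAA' hb⟩
    · intro ψ hψ
      have hψA : SAffine A ψ := by
        intro x hx
        obtain ⟨a, b, h⟩ := hψ x (by rw [hSXA']; exact Or.inr (Or.inr hx))
        exact ⟨a, b, fun y hy => h y (hAA' hy)⟩
      obtain ⟨α, β, hαβ⟩ := hAff ψ hψA
      refine ⟨α, β, fun y hy => ?_⟩
      have : y ∈ SY A := by
        simp only [SY, hA'def, Set.image_insert_eq] at hy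
        rcases hy with rfl | rfl | hy
        · exact hy₁A
        · exact hy₂A
        · exact hy
      exact hαβ y this
  have hA'S : A' ⊆ S := by
    intro p hp
    rcases hp with rfl | rfl | hp
    · exact hy₁S
    · exact hy₂S
    · exact hAS hp
  have heq := hmax A' hTN hA'S hAA'
  apply hznot
  have : (z, y₁) ∈ A := heq ▸ (Or.inl rfl : (z, y₁) ∈ A')
  exact ⟨(z, y₁), this, rfl⟩
end

section
/- Suppose the WEP holds for S ⊆ X × Y. Then every 2-net A contained in S is saturated in S: whenever (x,y) ∈ S with x ∈ A_X and y ∈ A_Y, we have (x,y) ∈ A. -/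
open Set

/-- If the WEP holds for `S`, every 2-net contained in `S` is saturated in `S`. -/
theorem wep_implies_twoNets_saturated
    (X Y : Set ℝ) (hX : X.Countable) (hY : Y.Countable)
    (hXpos : ∀ x ∈ X, 0 < x) (hYpos : ∀ y ∈ Y, 0 < y)
    (S : Set (ℝ × ℝ)) (hS : S ⊆ X ×ˢ Y)
    (hwep : WEP S)
    (A : Set (ℝ × ℝ)) (hAS : A ⊆ S) (hAnet : TwoNet A) :
    SaturatedIn A S := by
  intro p hpS hx hy
  by_contra hpA
  obtain ⟨φ, h, ψ, hdec⟩ := hwep (Set.indicator {p} 1)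
  -- on A the indicator vanishes, so ψ is A-affine
  have hzero : ∀ q ∈ A, (0 : ℝ) = φ q.1 + h q.1 * (q.2 - q.1) - ψ q.2 := by
    intro q hqA
    have hne : q ∉ ({p} : Set (ℝ × ℝ)) := by
      intro hq
      exact hpA (by simpa [Set.mem_singleton_iff.mp hq] using hqA)
    have := hdec q (hAS hqA)
    rwa [Set.indicator_of_notMem hne] at this
  have hAff : SAffine A ψ := by
    intro x hxA
    refine ⟨φ x, h x, fun y hyA => ?_⟩
    have := hzero (x, y) hyA
    simp only at this
    linarith
  obtain ⟨α, β, hglob⟩ := hAnet.2 ψ hAff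
  obtain ⟨y₁, y₂, hy12, h1A, h2A⟩ := hAnet.1 p.1 hx
  have e1 : (0 : ℝ) = φ p.1 + h p.1 * (y₁ - p.1) - ψ y₁ := hzero _ h1A
  have e2 : (0 : ℝ) = φ p.1 + h p.1 * (y₂ - p.1) - ψ y₂ := hzero _ h2A
  have g1 : ψ y₁ = α + β * y₁ := hglob y₁ ⟨(p.1, y₁), h1A, rfl⟩
  have g2 : ψ y₂ = α + β * y₂ := hglob y₂ ⟨(p.1, y₂), h2A, rfl⟩
  have hb : h p.1 = β := by
    have hd : y₁ - y₂ ≠ 0 := sub_ne_zero.mpr hy12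
    have : (h p.1 - β) * (y₁ - y₂) = 0 := by linarith
    rcases mul_eq_zero.mp this with h' | h'
    · linarith
    · exact absurd h' hd
  have ha : φ p.1 = α + β * p.1 := by
    rw [hb] at e1; linarith
  have gy : ψ p.2 = α + β * p.2 := hglob p.2 hy
  have hind : Set.indicator {p} (1 : ℝ × ℝ → ℝ) p = 1 := by
    simp
  have := hdec p hpS
  rw [hind, hb, ha, gy] at this
  linarith
end

section
/- Assume the WEP holds for S ⊆ X × Y and every 2-net in S is saturated in S. Let A be a 2-net in S and z ∈ S_X \ A_X. Then |Y_S(z) ∩ A_Y| ≤ 2. -/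
open Set

/-- Extended intersection lemma: under the WEP, if every 2-net in `S` is saturated,
then any `z ∈ S_X` outside `A_X` meets `A_Y` via `S` in at most two points. -/
theorem extended_intersection_lemma
    (X Y : Set ℝ) (hX : X.Countable) (hY : Y.Countable)
    (hXpos : ∀ x ∈ X, 0 < x) (hYpos : ∀ y ∈ Y, 0 < y)
    (S : Set (ℝ × ℝ)) (hS : S ⊆ X ×ˢ Y)
    (hwep : WEP S)
    (hsat : ∀ B : Set (ℝ × ℝ), B ⊆ S → TwoNet B → SaturatedIn B S)
    (A : Set (ℝ × ℝ)) (hAS : A ⊆ S) (hAnet : TwoNet A)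
    (z : ℝ) (hz : z ∈ SX S) (hznot : z ∉ SX A) :
    AtMostTwo (Yfib S z ∩ SY A) := by
  intro a ha b hb c hc
  by_contra hcon
  push_neg at hcon
  obtain ⟨hab, hac, hbc⟩ := hcon
  obtain ⟨haz, haY⟩ := ha
  obtain ⟨hbz, hbY⟩ := hb
  obtain ⟨hcz, hcY⟩ := hc
  set B : Set (ℝ × ℝ) := A ∪ {(z, a), (z, b)} with hBdef
  have hzx : ∀ x ∈ SX A, x ≠ z := by
    intro x hx hxz; exact hznot (hxz ▸ hx)
  have hBS : B ⊆ S := by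
    rintro p (hp | hp | hp)
    · exact hAS hp
    · subst hp; exact haz
    · subst hp; exact hbz
  have hSYB : SY B ⊆ SY A := by
    rintro y ⟨p, (hp | hp | hp), rfl⟩
    · exact ⟨p, hp, rfl⟩
    · subst hp; exact haY
    · subst hp; exact hbY
  have hBnet : TwoNet B := by
    constructor
    · rintro x ⟨p, (hp | hp | hp), rfl⟩
      · obtain ⟨y₁, y₂, hne, h1, h2⟩ := hAnet.1 p.1 ⟨p, hp, rfl⟩
        exact ⟨y₁, y₂, hne, Or.inl h1, Or.inl h2⟩
      · subst hp
        exact ⟨a, b, hab, Or.inr (Or.inl rfl), Or.inr (Or.inr rfl)⟩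
      · subst hp
        exact ⟨a, b, hab, Or.inr (Or.inl rfl), Or.inr (Or.inr rfl)⟩
    · intro ψ hψ
      have hψA : SAffine A ψ := by
        intro x hx
        obtain ⟨α, β, hfib⟩ := hψ x (by
          obtain ⟨p, hp, rfl⟩ := hx; exact ⟨p, Or.inl hp, rfl⟩)
        exact ⟨α, β, fun y hy => hfib y (Or.inl hy)⟩
      obtain ⟨α, β, hglob⟩ := hAnet.2 ψ hψA
      exact ⟨α, β, fun y hy => hglob y (hSYB hy)⟩
  have hmem : (z, c) ∈ B := by
    apply hsat B hBS hBnet (z, c) hcz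
    · exact ⟨(z, a), Or.inr (Or.inl rfl), rfl⟩
    · obtain ⟨p, hp, rfl⟩ := hcY
      exact ⟨p, Or.inl hp, rfl⟩
  rcases hmem with hm | hm | hm
  · exact hznot ⟨(z, c), hm, rfl⟩
  · exact hac (congrArg Prod.snd hm).symm
  · exact hbc (congrArg Prod.snd hm).symm
end

section
/- Let Q ∈ M(μ,ν) be a martingale measure with countable support S, and suppose x₁ ≠ x₂ in S_X satisfy |Y(x₁) ∩ Y(x₂)| ≥ 3. Then Q is not extremal in M(μ,ν): there exist Q₁ ≠ Q₂ in M(μ,ν) with Q = (Q₁ + Q₂)/2. Explicitly, for y₁ < y₂ < y₃ in the intersection, the perturbation assigning weights +α, -β, +γ at (x₁,y₁),(x₁,y₂),(x₁,y₃) and -α, +β, -γ at (x₂,y₁),(x₂,y₂),(x₂,y₃), with α = β - γ and β(y₁ - y₂) = γ(y₁ - y₃) and γ sufficiently small, preserves both marginals and the martingale property. -/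
open MeasureTheory Set ENNReal

/-- `Q` is a martingale measure with marginals `μ` and `ν`. -/
def IsMartingaleMeasure (μ ν : Measure ℝ) (Q : Measure (ℝ × ℝ)) : Prop :=
  IsProbabilityMeasure Q ∧ Q.map Prod.fst = μ ∧ Q.map Prod.snd = ν ∧
  Integrable (fun p : ℝ × ℝ => p.1) Q ∧ Integrable (fun p : ℝ × ℝ => p.2) Q ∧
  ∀ A : Set ℝ, MeasurableSet A →
    ∫ p in Prod.fst ⁻¹' A, p.2 ∂Q = ∫ p in Prod.fst ⁻¹' A, p.1 ∂Q

/-!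
Put masses `α, β, γ` at heights `y₁, y₂, y₃` with `α + γ = β` and `α y₁ + γ y₃ = β y₂`, and let
`Dp = α δ(x₁, y₁) + β δ(x₂, y₂) + γ δ(x₁, y₃)` and `Dm` be the same measure with `x₁` and `x₂`
exchanged. Both have the same marginals, and over each `x` they carry the same mass with the same
mean, so `Q - Dm + Dp` and `Q - Dp + Dm` are again martingale measures with marginals `μ, ν`, as
long as the weights stay below the six atoms of `Q` they are taken from. `Q` is their midpoint.
-/

namespace MeasureTheory

variable {ι α β E : Type*} [MeasurableSpace α] {Q Dm Dp : Measure α}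

namespace Measure

theorem map_sub_add_of_map_eq [MeasurableSpace β] [IsFiniteMeasure Dm] {f : α → β}
    (hf : Measurable f) (hle : Dm ≤ Q) (h : Dp.map f = Dm.map f) :
    (Q - Dm + Dp).map f = Q.map f := by
  rw [Measure.map_add _ _ hf, h, ← Measure.map_add _ _ hf, sub_add_cancel_of_le hle]

theorem eq_half_smul_sub_add_add_half_smul_sub_add [IsFiniteMeasure Dm] [IsFiniteMeasure Dp]
    (hm : Dm ≤ Q) (hp : Dp ≤ Q) :
    Q = (1 / 2 : ℝ≥0∞) • (Q - Dm + Dp) + (1 / 2 : ℝ≥0∞) • (Q - Dp + Dm) := by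
  have hsum : Q - Dm + Dp + (Q - Dp + Dm) = Q + Q :=
    calc Q - Dm + Dp + (Q - Dp + Dm) = (Q - Dm + Dm) + (Q - Dp + Dp) := by ac_rfl
      _ = Q + Q := by rw [sub_add_cancel_of_le hm, sub_add_cancel_of_le hp]
  rw [← smul_add, hsum, ← two_smul ℝ≥0∞ Q, smul_smul, one_div,
    ENNReal.inv_mul_cancel two_ne_zero ENNReal.ofNat_ne_top, one_smul]

theorem eq_of_sub_add_eq_sub_add [IsFiniteMeasure Q] (hm : Dm ≤ Q) (hp : Dp ≤ Q)
    (h : Q - Dm + Dp = Q - Dp + Dm) : Dp = Dm := by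
  have := isFiniteMeasure_of_le Q hm
  have := isFiniteMeasure_of_le Q hp
  ext s hs
  have hs' : Q s - Dm s + Dp s = Q s - Dp s + Dm s := by
    simpa only [add_apply, sub_apply hs hm, sub_apply hs hp] using congrArg (· s) h
  have key : Q s + 2 * Dp s = Q s + 2 * Dm s :=
    calc Q s + 2 * Dp s = (Q s - Dm s + Dm s) + 2 * Dp s := by rw [tsub_add_cancel_of_le (hm s)]
      _ = (Q s - Dm s + Dp s) + (Dm s + Dp s) := by ring
      _ = (Q s - Dp s + Dp s) + 2 * Dm s := by rw [hs']; ring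
      _ = Q s + 2 * Dm s := by rw [tsub_add_cancel_of_le (hp s)]
  rwa [ENNReal.add_right_inj (measure_ne_top Q s),
    ENNReal.mul_right_inj two_ne_zero ENNReal.ofNat_ne_top] at key

end Measure

variable [NormedAddCommGroup E]

theorem integrable_comp_of_map_eq [MeasurableSpace β] {μ μ' : Measure α} {f : α → β}
    {g : β → E} (hf : Measurable f) (hg : StronglyMeasurable g) (h : μ'.map f = μ.map f)
    (hμ : Integrable (g ∘ f) μ) : Integrable (g ∘ f) μ' := by
  rw [← integrable_map_measure hg.aestronglyMeasurable hf.aemeasurable, h]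
  exact (integrable_map_measure hg.aestronglyMeasurable hf.aemeasurable).2 hμ

variable [NormedSpace ℝ E]

theorem integral_sub_add_measure [IsFiniteMeasure Dm] {f : α → E} (hle : Dm ≤ Q)
    (hQ : Integrable f Q) (hp : Integrable f Dp) :
    ∫ x, f x ∂(Q - Dm + Dp) = ∫ x, f x ∂Q - ∫ x, f x ∂Dm + ∫ x, f x ∂Dp := by
  have hsub : Integrable f (Q - Dm) := hQ.mono_measure Measure.sub_le
  have hQ : ∫ x, f x ∂Q = ∫ x, f x ∂(Q - Dm) + ∫ x, f x ∂Dm := by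
    conv_lhs => rw [← Measure.sub_add_cancel_of_le hle]
    exact integral_add_measure hsub (hQ.mono_measure hle)
  rw [integral_add_measure hsub hp, hQ, add_sub_cancel_right]

theorem setIntegral_sub_add_measure [IsFiniteMeasure Dm] {f : α → E} {s : Set α}
    (hs : MeasurableSet s) (hle : Dm ≤ Q) (hQ : Integrable f Q) (hp : Integrable f Dp) :
    ∫ x in s, f x ∂(Q - Dm + Dp) =
      ∫ x in s, f x ∂Q - ∫ x in s, f x ∂Dm + ∫ x in s, f x ∂Dp := by
  rw [Measure.restrict_add, Measure.restrict_sub_eq_restrict_sub_restrict hs]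
  exact integral_sub_add_measure (Measure.restrict_mono subset_rfl hle) hQ.restrict hp.restrict

variable [Fintype ι]

theorem sum_smul_dirac_le [MeasurableSingletonClass α] {μ : Measure α} {p : ι → α}
    (hp : Function.Injective p) {w : ι → ℝ≥0∞} (hw : ∀ i, w i ≤ μ {p i}) :
    ∑ i, w i • Measure.dirac (p i) ≤ μ :=
  calc ∑ i, w i • Measure.dirac (p i) ≤ ∑ i, μ.restrict {p i} :=
        Finset.sum_le_sum fun i _ => by rw [Measure.restrict_singleton]; gcongr; exact hw i
    _ = μ.restrict (⋃ i, {p i}) := by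
        rw [Measure.restrict_iUnion (fun i j hij => disjoint_singleton.2 (hp.ne hij))
          fun _ => measurableSet_singleton _, Measure.sum_fintype]
    _ ≤ μ := Measure.restrict_le_self

theorem map_sum_smul_dirac [MeasurableSpace β] {f : α → β} (hf : Measurable f)
    (w : ι → ℝ≥0∞) (p : ι → α) :
    (∑ i, w i • Measure.dirac (p i)).map f = ∑ i, w i • Measure.dirac (f (p i)) := by
  simp [Measure.map_finset_sum' hf.aemeasurable, Measure.map_smul, Measure.map_dirac' hf]

theorem integral_sum_smul_dirac [MeasurableSingletonClass α] [CompleteSpace E] (f : α → E)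
    {w : ι → ℝ≥0∞} (hw : ∀ i, w i ≠ ∞) (p : ι → α) :
    ∫ x, f x ∂(∑ i, w i • Measure.dirac (p i)) = ∑ i, (w i).toReal • f (p i) := by
  rw [integral_finsetSum_measure fun i _ =>
    (integrable_dirac enorm_lt_top).smul_measure (hw i)]
  simp [integral_smul_measure, integral_dirac]

end MeasureTheory

open Filter Topology in
theorem Set.Finite.exists_pos_ofReal_le {ι : Type*} {s : Set ι} (hs : s.Finite)
    {f : ι → ℝ≥0∞} (hf : ∀ i ∈ s, 0 < f i) :
    ∃ ε : ℝ, 0 < ε ∧ ∀ i ∈ s, ENNReal.ofReal ε ≤ f i := by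
  have hsmall : ∀ᶠ ε in 𝓝[>] (0 : ℝ), ∀ i ∈ s, ENNReal.ofReal ε < f i :=
    (eventually_all_finite hs).2 fun i hi => nhdsWithin_le_nhds <|
      (ENNReal.continuous_ofReal.tendsto' 0 0 ofReal_zero).eventually (gt_mem_nhds (hf i hi))
  obtain ⟨ε, hlt, hpos⟩ := (hsmall.and self_mem_nhdsWithin).exists
  exact ⟨ε, hpos, fun i hi => (hlt i hi).le⟩

theorem exists_three_point_weights {y₁ y₂ y₃ ε : ℝ} (h12 : y₁ < y₂) (h23 : y₂ < y₃)
    (hε : 0 < ε) :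
    ∃ v : Fin 3 → ℝ, (∀ i, 0 < v i ∧ v i ≤ ε) ∧ v 0 + v 2 = v 1 ∧
      v 0 * y₁ + v 2 * y₃ = v 1 * y₂ := by
  set t := ε / (y₃ - y₁)
  have ht : 0 < t := div_pos hε (by linarith)
  have htε : t * (y₃ - y₁) = ε := div_mul_cancel₀ ε (by linarith)
  refine ⟨![t * (y₃ - y₂), ε, t * (y₂ - y₁)], fun i => ?_, ?_, ?_⟩
  · fin_cases i <;> refine ⟨?_, ?_⟩ <;> simp <;> nlinarith
  · simp only [Fin.isValue, Matrix.cons_val]; linarith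
  · simp only [Fin.isValue, Matrix.cons_val]; rw [← htε]; ring

noncomputable def threePointMeasure (v x y : Fin 3 → ℝ) : Measure (ℝ × ℝ) :=
  ∑ i, ENNReal.ofReal (v i) • Measure.dirac (x i, y i)

section ThreePointMeasure

variable {v x y : Fin 3 → ℝ}

theorem threePointMeasure_le {Q : Measure (ℝ × ℝ)} (hy : Function.Injective y)
    (hv : ∀ i, ENNReal.ofReal (v i) ≤ Q {(x i, y i)}) : threePointMeasure v x y ≤ Q :=
  sum_smul_dirac_le (Function.Injective.of_comp (f := Prod.snd) (g := fun i => (x i, y i)) hy) hv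

theorem setIntegral_snd_threePointMeasure (hv : ∀ i, 0 ≤ v i) {A : Set ℝ}
    (hA : MeasurableSet A) :
    ∫ p in Prod.fst ⁻¹' A, p.2 ∂threePointMeasure v x y =
      ∑ i, v i * A.indicator (fun _ => y i) (x i) := by
  rw [← integral_indicator (measurable_fst hA),
    threePointMeasure, integral_sum_smul_dirac _ fun _ => ofReal_ne_top]
  simp only [hv, toReal_ofReal, indicator, mem_preimage, smul_eq_mul, mul_ite, mul_zero]
  rfl

variable {x₁ x₂ y₁ y₂ y₃ : ℝ}

theorem map_fst_threePointMeasure_swap (hv : ∀ i, 0 ≤ v i) (hmass : v 0 + v 2 = v 1) :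
    (threePointMeasure v ![x₁, x₂, x₁] y).map Prod.fst =
      (threePointMeasure v ![x₂, x₁, x₂] y).map Prod.fst := by
  rw [threePointMeasure, threePointMeasure, map_sum_smul_dirac measurable_fst,
    map_sum_smul_dirac measurable_fst]
  simp only [Fin.sum_univ_three, Fin.isValue, Matrix.cons_val]
  rw [← hmass, ENNReal.ofReal_add (hv 0) (hv 2), add_smul, add_smul]
  abel

theorem map_snd_threePointMeasure_swap :
    (threePointMeasure v ![x₁, x₂, x₁] y).map Prod.snd =
      (threePointMeasure v ![x₂, x₁, x₂] y).map Prod.snd := by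
  rw [threePointMeasure, threePointMeasure, map_sum_smul_dirac measurable_snd,
    map_sum_smul_dirac measurable_snd]

theorem setIntegral_snd_threePointMeasure_swap (hv : ∀ i, 0 ≤ v i)
    (hmean : v 0 * y₁ + v 2 * y₃ = v 1 * y₂) {A : Set ℝ} (hA : MeasurableSet A) :
    ∫ p in Prod.fst ⁻¹' A, p.2 ∂threePointMeasure v ![x₁, x₂, x₁] ![y₁, y₂, y₃] =
      ∫ p in Prod.fst ⁻¹' A, p.2 ∂threePointMeasure v ![x₂, x₁, x₂] ![y₁, y₂, y₃] := by
  rw [setIntegral_snd_threePointMeasure hv hA, setIntegral_snd_threePointMeasure hv hA]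
  by_cases h₁ : x₁ ∈ A <;> by_cases h₂ : x₂ ∈ A <;> simp [Fin.sum_univ_three, h₁, h₂] <;>
    linarith

theorem threePointMeasure_swap_ne (hv : 0 < v 0) (hx : x₁ ≠ x₂) (h12 : y₁ < y₂)
    (h13 : y₁ < y₃) :
    threePointMeasure v ![x₁, x₂, x₁] ![y₁, y₂, y₃] ≠
      threePointMeasure v ![x₂, x₁, x₂] ![y₁, y₂, y₃] := by
  intro h
  have h₁₁ : v 0 ≤ 0 := by
    simpa [threePointMeasure, Fin.sum_univ_three, hx.symm, h12.ne', h13.ne'] using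
      congrArg (· {(x₁, y₁)}) h
  exact h₁₁.not_gt hv

end ThreePointMeasure

namespace IsMartingaleMeasure

variable {μ ν : Measure ℝ} {Q Dm Dp : Measure (ℝ × ℝ)}

theorem sub_add (hQ : IsMartingaleMeasure μ ν Q) (hle : Dm ≤ Q)
    (hfst : Dp.map Prod.fst = Dm.map Prod.fst) (hsnd : Dp.map Prod.snd = Dm.map Prod.snd)
    (hmart : ∀ A : Set ℝ, MeasurableSet A →
      ∫ p in Prod.fst ⁻¹' A, p.2 ∂Dp = ∫ p in Prod.fst ⁻¹' A, p.2 ∂Dm) :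
    IsMartingaleMeasure μ ν (Q - Dm + Dp) := by
  obtain ⟨hQprob, hQfst, hQsnd, hQ₁, hQ₂, hQmart⟩ := hQ
  have := isFiniteMeasure_of_le Q hle
  have hfst' := Measure.map_sub_add_of_map_eq measurable_fst hle hfst
  have hsnd' := Measure.map_sub_add_of_map_eq measurable_snd hle hsnd
  have hDp₂ : Integrable (fun p : ℝ × ℝ => p.2) Dp :=
    integrable_comp_of_map_eq (g := id) measurable_snd stronglyMeasurable_id hsnd
      (hQ₂.mono_measure hle)
  refine ⟨⟨?_⟩, hfst'.trans hQfst, hsnd'.trans hQsnd,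
    integrable_comp_of_map_eq (g := id) measurable_fst stronglyMeasurable_id hfst' hQ₁,
    integrable_comp_of_map_eq (g := id) measurable_snd stronglyMeasurable_id hsnd' hQ₂,
    fun A hA => ?_⟩
  · simpa [Measure.map_apply measurable_fst MeasurableSet.univ] using congrArg (· univ) hfst'
  · -- the `p.1`-integrals only see the first marginal, which is unchanged
    have hfst_int (ρ : Measure (ℝ × ℝ)) :
        ∫ p in Prod.fst ⁻¹' A, p.1 ∂ρ = ∫ x in A, x ∂(ρ.map Prod.fst) :=
      (setIntegral_map hA aestronglyMeasurable_id measurable_fst.aemeasurable).symm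
    rw [setIntegral_sub_add_measure (measurable_fst hA) hle hQ₂ hDp₂, hmart A hA,
      sub_add_cancel, hQmart A hA, hfst_int, hfst_int, hfst']

theorem exists_ne_midpoint (hQ : IsMartingaleMeasure μ ν Q) (hm : Dm ≤ Q) (hp : Dp ≤ Q)
    (hne : Dp ≠ Dm) (hfst : Dp.map Prod.fst = Dm.map Prod.fst)
    (hsnd : Dp.map Prod.snd = Dm.map Prod.snd)
    (hmart : ∀ A : Set ℝ, MeasurableSet A →
      ∫ p in Prod.fst ⁻¹' A, p.2 ∂Dp = ∫ p in Prod.fst ⁻¹' A, p.2 ∂Dm) :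
    ∃ Q₁ Q₂ : Measure (ℝ × ℝ),
      IsMartingaleMeasure μ ν Q₁ ∧ IsMartingaleMeasure μ ν Q₂ ∧ Q₁ ≠ Q₂ ∧
      Q = (1 / 2 : ℝ≥0∞) • Q₁ + (1 / 2 : ℝ≥0∞) • Q₂ := by
  have := hQ.1
  have := isFiniteMeasure_of_le Q hm
  have := isFiniteMeasure_of_le Q hp
  exact ⟨Q - Dm + Dp, Q - Dp + Dm, hQ.sub_add hm hfst hsnd hmart,
    hQ.sub_add hp hfst.symm hsnd.symm fun A hA => (hmart A hA).symm,
    fun h => hne (Measure.eq_of_sub_add_eq_sub_add hm hp h),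
    Measure.eq_half_smul_sub_add_add_half_smul_sub_add hm hp⟩

end IsMartingaleMeasure

theorem not_extremal_of_three_common_points_general
    (μ ν : Measure ℝ) (Q : Measure (ℝ × ℝ))
    (hQ : IsMartingaleMeasure μ ν Q)
    (x₁ x₂ : ℝ) (hx : x₁ ≠ x₂)
    (y₁ y₂ y₃ : ℝ) (h12 : y₁ < y₂) (h23 : y₂ < y₃)
    (hsupp : ∀ i ∈ ({x₁, x₂} : Set ℝ), ∀ j ∈ ({y₁, y₂, y₃} : Set ℝ),
      0 < Q {(i, j)}) :
    ∃ Q₁ Q₂ : Measure (ℝ × ℝ),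
      IsMartingaleMeasure μ ν Q₁ ∧ IsMartingaleMeasure μ ν Q₂ ∧ Q₁ ≠ Q₂ ∧
      Q = (1 / 2 : ℝ≥0∞) • Q₁ + (1 / 2 : ℝ≥0∞) • Q₂ := by
  obtain ⟨ε, hε, hεQ⟩ := (Set.toFinite ({x₁, x₂} ×ˢ {y₁, y₂, y₃})).exists_pos_ofReal_le
    (f := fun q => Q {q}) fun q hq => hsupp q.1 hq.1 q.2 hq.2
  obtain ⟨v, hv, hmass, hmean⟩ := exists_three_point_weights h12 h23 hε
  have hv_nonneg (i : Fin 3) : 0 ≤ v i := (hv i).1.le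
  have hy : Function.Injective ![y₁, y₂, y₃] :=
    (Fin.strictMono_iff_lt_succ.2 (by simp [Fin.forall_fin_two, h12, h23])).injective
  have hle (x : Fin 3 → ℝ) (hx : ∀ i, x i ∈ ({x₁, x₂} : Set ℝ)) :
      threePointMeasure v x ![y₁, y₂, y₃] ≤ Q :=
    threePointMeasure_le hy fun i => (ENNReal.ofReal_le_ofReal (hv i).2).trans
      (hεQ _ ⟨hx i, by fin_cases i <;> simp⟩)
  exact hQ.exists_ne_midpoint (hle _ fun i => by fin_cases i <;> simp)
    (hle _ fun i => by fin_cases i <;> simp)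
    (threePointMeasure_swap_ne (hv 0).1 hx h12 (h12.trans h23))
    (map_fst_threePointMeasure_swap hv_nonneg hmass) map_snd_threePointMeasure_swap
    fun A hA => setIntegral_snd_threePointMeasure_swap hv_nonneg hmean hA

/-- If a martingale measure `Q` with countable support has two distinct `x`-points
whose fibers share at least three points, `Q` is not extremal: it is the midpoint of
two distinct martingale measures with the same marginals. -/
theorem not_extremal_of_three_common_points
    (μ ν : Measure ℝ) (Q : Measure (ℝ × ℝ))
    (hμpos : μ {x : ℝ | x ≤ 0} = 0) (hνpos : ν {x : ℝ | x ≤ 0} = 0)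
    (hQ : IsMartingaleMeasure μ ν Q)
    (C : Set (ℝ × ℝ)) (hC : C.Countable) (hQC : Q Cᶜ = 0)
    (x₁ x₂ : ℝ) (hx : x₁ ≠ x₂)
    (y₁ y₂ y₃ : ℝ) (h12 : y₁ < y₂) (h23 : y₂ < y₃)
    (hsupp : ∀ i ∈ ({x₁, x₂} : Set ℝ), ∀ j ∈ ({y₁, y₂, y₃} : Set ℝ),
      0 < Q {(i, j)}) :
    ∃ Q₁ Q₂ : Measure (ℝ × ℝ),
      IsMartingaleMeasure μ ν Q₁ ∧ IsMartingaleMeasure μ ν Q₂ ∧ Q₁ ≠ Q₂ ∧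
      Q = (1 / 2 : ℝ≥0∞) • Q₁ + (1 / 2 : ℝ≥0∞) • Q₂ :=
  not_extremal_of_three_common_points_general μ ν Q hQ x₁ x₂ hx y₁ y₂ y₃ h12 h23 hsupp
end

section
/- Let (Sₙ)ₙ≥1 be an increasing sequence of subsets of X × Y such that the WEP holds for each Sₙ, and assume that for each n every Sₙ-affine function is the restriction to Sₙ of an S_{n+1}-affine function. Then the WEP holds for S = ⋃ₙ Sₙ. -/
open Set

/-- Dependent choice along `ℕ`: build a chain satisfying a predicate and a
step relation. -/
lemma wep_dep_chain {α : Type*} (Q : ℕ → α → Prop) (R : ℕ → α → α → Prop)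
    (h0 : ∃ a, Q 0 a) (hs : ∀ n a, Q n a → ∃ b, Q (n + 1) b ∧ R n a b) :
    ∃ g : ℕ → α, (∀ n, Q n (g n)) ∧ ∀ n, R n (g n) (g (n + 1)) := by
  choose b hb hR using hs
  obtain ⟨a0, ha0⟩ := h0
  let g : ∀ n : ℕ, {a // Q n a} :=
    fun n => Nat.rec ⟨a0, ha0⟩ (fun n p => ⟨b n p.1 p.2, hb n p.1 p.2⟩) n
  exact ⟨fun n => (g n).1, fun n => (g n).2, fun n => hR n (g n).1 (g n).2⟩

/-- Extension lemma: if the WEP holds for each set of an increasing sequence and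
every `Sₙ`-affine function extends to an `S_{n+1}`-affine function, then the WEP
holds for the union. -/
theorem wep_increasing_union
    (X Y : Set ℝ) (hX : X.Countable) (hY : Y.Countable)
    (hXpos : ∀ x ∈ X, 0 < x) (hYpos : ∀ y ∈ Y, 0 < y)
    (Sn : ℕ → Set (ℝ × ℝ)) (hSn : ∀ n, Sn n ⊆ X ×ˢ Y)
    (hmono : Monotone Sn)
    (hwep : ∀ n, WEP (Sn n))
    (hext : ∀ n, ∀ ψ : ℝ → ℝ, SAffine (Sn n) ψ →
      ∃ ψ' : ℝ → ℝ, SAffine (Sn (n + 1)) ψ' ∧ ∀ y ∈ SY (Sn n), ψ' y = ψ y) :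
    WEP (⋃ n, Sn n) := by
  classical
  intro f
  -- a decomposition on `Sn n` can be corrected into one on `Sn (n+1)` with the
  -- same `ψ` on `SY (Sn n)`
  have step : ∀ n (t : (ℝ → ℝ) × (ℝ → ℝ) × (ℝ → ℝ)),
      (∀ p ∈ Sn n, f p = t.1 p.1 + t.2.1 p.1 * (p.2 - p.1) - t.2.2 p.2) →
      ∃ t' : (ℝ → ℝ) × (ℝ → ℝ) × (ℝ → ℝ),
        (∀ p ∈ Sn (n + 1), f p = t'.1 p.1 + t'.2.1 p.1 * (p.2 - p.1) - t'.2.2 p.2) ∧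
        ∀ y ∈ SY (Sn n), t'.2.2 y = t.2.2 y := by
    rintro n ⟨φ, h, ψ⟩ hdec
    obtain ⟨φ₀, h₀, ψ₀, hdec₀⟩ := hwep (n + 1) f
    have hδ : SAffine (Sn n) (fun y => ψ₀ y - ψ y) := by
      rintro x ⟨p, hp, rfl⟩
      refine ⟨φ₀ p.1 - φ p.1, h₀ p.1 - h p.1, fun y hy => ?_⟩
      have h1 := hdec (p.1, y) hy
      have h2 := hdec₀ (p.1, y) (hmono (Nat.le_succ n) hy)
      simp only at h1 h2 ⊢
      linarith
    obtain ⟨δ, hδaff, hδeq⟩ := hext n _ hδ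
    have hab : ∀ x : ℝ, ∃ a b : ℝ, ∀ y ∈ Yfib (Sn (n + 1)) x, δ y = a + b * (y - x) := by
      intro x
      by_cases hx : x ∈ SX (Sn (n + 1))
      · exact hδaff x hx
      · exact ⟨0, 0, fun y hy => absurd ⟨(x, y), hy, rfl⟩ hx⟩
    choose a b hab using hab
    refine ⟨⟨fun x => φ₀ x - a x, fun x => h₀ x - b x, fun y => ψ₀ y - δ y⟩, ?_, ?_⟩
    · intro p hp
      have h2 := hdec₀ p hp
      have h3 := hab p.1 p.2 hp
      simp only
      linarith
    · intro y hy
      have h4 := hδeq y hy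
      simp only at h4 ⊢
      linarith
  -- build the chain of compatible decompositions
  obtain ⟨φ₀, h₀, ψ₀, hdec₀⟩ := hwep 0 f
  obtain ⟨g, hg, hgc⟩ :=
    wep_dep_chain
      (fun n (t : (ℝ → ℝ) × (ℝ → ℝ) × (ℝ → ℝ)) =>
        ∀ p ∈ Sn n, f p = t.1 p.1 + t.2.1 p.1 * (p.2 - p.1) - t.2.2 p.2)
      (fun n t t' => ∀ y ∈ SY (Sn n), t'.2.2 y = t.2.2 y)
      ⟨⟨φ₀, h₀, ψ₀⟩, hdec₀⟩ step
  have hSYmono : ∀ {n m : ℕ}, n ≤ m → SY (Sn n) ⊆ SY (Sn m) := by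
    rintro n m hnm y ⟨p, hp, rfl⟩
    exact ⟨p, hmono hnm hp, rfl⟩
  -- compatibility of the ψ's across levels
  have compat : ∀ n m, n ≤ m → ∀ y ∈ SY (Sn n), (g m).2.2 y = (g n).2.2 y := by
    intro n m hnm
    induction m, hnm using Nat.le_induction with
    | base => intro y _; rfl
    | succ m hnm ih =>
      intro y hy
      rw [hgc m y (hSYmono hnm hy), ih y hy]
  -- the global ψ
  set Psi : ℝ → ℝ := fun y =>
    if hy : ∃ n, y ∈ SY (Sn n) then (g (Nat.find hy)).2.2 y else 0 with hPsidef
  have hPsi : ∀ n, ∀ y ∈ SY (Sn n), Psi y = (g n).2.2 y := by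
    intro n y hy
    have hex : ∃ n, y ∈ SY (Sn n) := ⟨n, hy⟩
    have : Psi y = (g (Nat.find hex)).2.2 y := by
      rw [hPsidef]; exact dif_pos hex
    rw [this, ← compat (Nat.find hex) n (Nat.find_le hy) y (Nat.find_spec hex)]
  -- construct φ and h fiberwise
  have main : ∀ x : ℝ, ∃ r s : ℝ, ∀ y : ℝ, (x, y) ∈ (⋃ n, Sn n) →
      f (x, y) = r + s * (y - x) - Psi y := by
    intro x
    by_cases htwo : ∃ y₁ y₂ : ℝ, y₁ ≠ y₂ ∧ (x, y₁) ∈ (⋃ n, Sn n) ∧ (x, y₂) ∈ (⋃ n, Sn n)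
    · obtain ⟨y₁, y₂, hne, hy₁, hy₂⟩ := htwo
      obtain ⟨n₁, hn₁⟩ := Set.mem_iUnion.1 hy₁
      obtain ⟨n₂, hn₂⟩ := Set.mem_iUnion.1 hy₂
      set N := max n₁ n₂ with hN
      have hN₁ : (x, y₁) ∈ Sn N := hmono (le_max_left _ _) hn₁
      have hN₂ : (x, y₂) ∈ Sn N := hmono (le_max_right _ _) hn₂
      refine ⟨(g N).1 x, (g N).2.1 x, fun y hy => ?_⟩
      obtain ⟨m, hm⟩ := Set.mem_iUnion.1 hy
      set M := max N m with hM
      have hM₁ : (x, y₁) ∈ Sn M := hmono (le_max_left _ _) hN₁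
      have hM₂ : (x, y₂) ∈ Sn M := hmono (le_max_left _ _) hN₂
      have hMy : (x, y) ∈ Sn M := hmono (le_max_right _ _) hm
      have e1 := hg M (x, y₁) hM₁
      have e2 := hg M (x, y₂) hM₂
      have e3 := hg M (x, y) hMy
      have e1' := hg N (x, y₁) hN₁
      have e2' := hg N (x, y₂) hN₂
      have c1 : (g M).2.2 y₁ = (g N).2.2 y₁ :=
        compat N M (le_max_left _ _) y₁ ⟨(x, y₁), hN₁, rfl⟩
      have c2 : (g M).2.2 y₂ = (g N).2.2 y₂ :=
        compat N M (le_max_left _ _) y₂ ⟨(x, y₂), hN₂, rfl⟩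
      have cy : Psi y = (g M).2.2 y := hPsi M y ⟨(x, y), hMy, rfl⟩
      simp only at e1 e2 e3 e1' e2'
      have hh : (g M).2.1 x = (g N).2.1 x := by
        have hmul : ((g M).2.1 x - (g N).2.1 x) * (y₁ - y₂) = 0 := by ring_nf; nlinarith [e1, e2, e1', e2', c1, c2]
        rcases mul_eq_zero.1 hmul with h' | h'
        · linarith
        · exact absurd (by linarith : y₁ = y₂) hne
      rw [hh] at e1
      have hφ : (g M).1 x = (g N).1 x := by linarith
      rw [cy, e3, hh, hφ]
    · push_neg at htwo
      by_cases hone : ∃ y₀ : ℝ, (x, y₀) ∈ (⋃ n, Sn n)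
      · obtain ⟨y₀, hy₀⟩ := hone
        obtain ⟨m, hm⟩ := Set.mem_iUnion.1 hy₀
        refine ⟨f (x, y₀) + Psi y₀, 0, fun y hy => ?_⟩
        have hyy : y = y₀ := by
          by_contra hne
          exact htwo y y₀ hne hy hy₀
        subst hyy
        ring
      · push_neg at hone
        exact ⟨0, 0, fun y hy => absurd hy (hone y)⟩
  choose r s hrs using main
  refine ⟨r, s, Psi, fun p hp => ?_⟩
  have := hrs p.1 p.2 (by simpa using hp)
  simpa using this
end

section
/- Let (Sₙ)ₙ≥1 be an increasing sequence of 2-nets in X × Y such that the WEP holds for each Sₙ. Then the WEP holds for S = ⋃ₙ Sₙ. -/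
open Set

/-! Two decompositions of the same `f` on a 2-net have `ψ`-parts differing by a fiber-wise
affine, hence globally affine, function `α + β y`; since every fiber has two points, their
`φ`- and `h`-parts are then determined by the `ψ`-parts. So a decomposition on `Sₙ₊₁`, corrected
by such an affine function, agrees with a given one on `Sₙ` over the projections of `Sₙ`.
Iterating gives a compatible sequence of decompositions, which glues to one on `⋃ₙ Sₙ`. -/

theorem eq_and_eq_of_add_mul_eq_add_mul {K : Type*} [Field K] {a b c d s t : K} (hst : s ≠ t)
    (hs : a + b * s = c + d * s) (ht : a + b * t = c + d * t) : a = c ∧ b = d := by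
  have hbd : b = d := by
    have : (b - d) * (s - t) = 0 := by linear_combination hs - ht
    simpa [sub_eq_zero, hst] using this
  subst hbd
  exact ⟨by linear_combination hs, rfl⟩

theorem exists_seq_of_forall_exists_succ {α : Type*} {P : ℕ → α → Prop} {R : ℕ → α → α → Prop}
    (h₀ : ∃ a, P 0 a) (hsucc : ∀ n a, P n a → ∃ b, P (n + 1) b ∧ R n a b) :
    ∃ s : ℕ → α, (∀ n, P n (s n)) ∧ ∀ n, R n (s n) (s (n + 1)) := by
  choose next hnext hR using hsucc
  let s : ∀ n, {a // P n a} :=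
    fun n => Nat.rec ⟨h₀.choose, h₀.choose_spec⟩ (fun n a => ⟨next n a a.2, hnext n a a.2⟩) n
  exact ⟨fun n => (s n).1, fun n => (s n).2, fun n => hR n (s n).1 (s n).2⟩

theorem Monotone.exists_eqOn_of_eqOn_succ {α β : Type*} {A : ℕ → Set α} (hA : Monotone A)
    {g : ℕ → α → β} (hg : ∀ n, EqOn (g (n + 1)) (g n) (A n)) :
    ∃ G : α → β, ∀ n, EqOn G (g n) (A n) := by
  classical
  have hle : ∀ n m, n ≤ m → EqOn (g m) (g n) (A n) := by
    intro n m hnm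
    induction m, hnm using Nat.le_induction with
    | base => exact eqOn_refl _ _
    | succ m hnm ih => exact ((hg m).mono (hA hnm)).trans ih
  refine ⟨fun a => if ha : ∃ n, a ∈ A n then g (Nat.find ha) a else g 0 a, fun n a ha => ?_⟩
  have hex : ∃ n, a ∈ A n := ⟨n, ha⟩
  simp only [dif_pos hex]
  exact (hle _ n (Nat.find_min' hex ha) (Nat.find_spec hex)).symm

structure Decomposition where
  φ : ℝ → ℝ
  h : ℝ → ℝ
  ψ : ℝ → ℝ

namespace Decomposition

def Represents (D : Decomposition) (S : Set (ℝ × ℝ)) (f : ℝ × ℝ → ℝ) : Prop :=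
  ∀ p ∈ S, f p = D.φ p.1 + D.h p.1 * (p.2 - p.1) - D.ψ p.2

-- `α + β y = (α + β x) + β (y - x)`, so this still represents the same `f`.
def addAffine (D : Decomposition) (α β : ℝ) : Decomposition :=
  ⟨fun x => D.φ x + α + β * x, fun x => D.h x + β, fun y => D.ψ y + α + β * y⟩

variable {D E : Decomposition} {S : Set (ℝ × ℝ)} {f : ℝ × ℝ → ℝ}

theorem Represents.mono {T : Set (ℝ × ℝ)} (hD : D.Represents T f) (hST : S ⊆ T) :
    D.Represents S f :=
  fun p hp => hD p (hST hp)

theorem Represents.addAffine (hD : D.Represents S f) (α β : ℝ) :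
    (D.addAffine α β).Represents S f := by
  intro p hp
  simp only [Decomposition.addAffine, hD p hp]
  ring

theorem Represents.sAffine_sub (hD : D.Represents S f) (hE : E.Represents S f) :
    SAffine S (fun y => D.ψ y - E.ψ y) := by
  rintro x -
  refine ⟨D.φ x - E.φ x, D.h x - E.h x, fun y hy => ?_⟩
  have hDy := hD (x, y) hy
  have hEy := hE (x, y) hy
  simp only at hDy hEy
  linarith

theorem Represents.eqOn_of_oneErased (hS : OneErased S) (hD : D.Represents S f)
    (hE : E.Represents S f) (hψ : EqOn D.ψ E.ψ (SY S)) :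
    EqOn D.φ E.φ (SX S) ∧ EqOn D.h E.h (SX S) := by
  suffices ∀ x ∈ SX S, D.φ x = E.φ x ∧ D.h x = E.h x from
    ⟨fun x hx => (this x hx).1, fun x hx => (this x hx).2⟩
  intro x hx
  obtain ⟨y₁, y₂, hne, hy₁, hy₂⟩ := hS x hx
  have line_eq : ∀ y, (x, y) ∈ S → D.φ x + D.h x * (y - x) = E.φ x + E.h x * (y - x) := by
    intro y hy
    have hDy := hD (x, y) hy
    have hEy := hE (x, y) hy
    have hψy := hψ ⟨(x, y), hy, rfl⟩
    simp only at hDy hEy hψy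
    linarith
  exact eq_and_eq_of_add_mul_eq_add_mul (sub_left_injective.ne hne)
    (line_eq y₁ hy₁) (line_eq y₂ hy₂)

def AgreesOn (E D : Decomposition) (A : Set (ℝ × ℝ)) : Prop :=
  EqOn E.φ D.φ (SX A) ∧ EqOn E.h D.h (SX A) ∧ EqOn E.ψ D.ψ (SY A)

theorem Represents.exists_agreesOn_of_twoNet {A B : Set (ℝ × ℝ)} (hA : TwoNet A) (hAB : A ⊆ B)
    (hD : D.Represents A f) (hE : E.Represents B f) :
    ∃ E' : Decomposition, E'.Represents B f ∧ E'.AgreesOn D A := by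
  obtain ⟨α, β, hαβ⟩ := hA.2 _ (hD.sAffine_sub (hE.mono hAB))
  have hE' := hE.addAffine α β
  have hψ : EqOn (E.addAffine α β).ψ D.ψ (SY A) := by
    intro y hy
    have := hαβ y hy
    simp only [Decomposition.addAffine] at this ⊢
    linarith
  obtain ⟨hφ, hh⟩ := (hE'.mono hAB).eqOn_of_oneErased hA.1 hD hψ
  exact ⟨_, hE', hφ, hh, hψ⟩

end Decomposition

theorem wep_iff (S : Set (ℝ × ℝ)) :
    WEP S ↔ ∀ f, ∃ D : Decomposition, D.Represents S f :=
  forall_congr' fun _ => ⟨fun ⟨φ, h, ψ, hD⟩ => ⟨⟨φ, h, ψ⟩, hD⟩, fun ⟨D, hD⟩ => ⟨D.φ, D.h, D.ψ, hD⟩⟩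

theorem wep_increasing_union_of_twoNets_general
    (Sn : ℕ → Set (ℝ × ℝ))
    (hmono : Monotone Sn)
    (hnet : ∀ n, TwoNet (Sn n))
    (hwep : ∀ n, WEP (Sn n)) :
    WEP (⋃ n, Sn n) := by
  simp only [wep_iff] at hwep ⊢
  intro f
  obtain ⟨D, hD, hD_succ⟩ := exists_seq_of_forall_exists_succ
    (P := fun n (D : Decomposition) => D.Represents (Sn n) f)
    (R := fun n D E => E.AgreesOn D (Sn n))
    (hwep 0 f) fun n _ hD =>
      have ⟨E, hE⟩ := hwep (n + 1) f
      hD.exists_agreesOn_of_twoNet (hnet n) (hmono n.le_succ) hE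
  have hSX : Monotone (SX ∘ Sn) := fun _ _ h => image_mono (hmono h)
  have hSY : Monotone (SY ∘ Sn) := fun _ _ h => image_mono (hmono h)
  obtain ⟨φ, hφ⟩ := hSX.exists_eqOn_of_eqOn_succ (g := fun n => (D n).φ)
    fun n => (hD_succ n).1
  obtain ⟨h, hh⟩ := hSX.exists_eqOn_of_eqOn_succ (g := fun n => (D n).h)
    fun n => (hD_succ n).2.1
  obtain ⟨ψ, hψ⟩ := hSY.exists_eqOn_of_eqOn_succ (g := fun n => (D n).ψ)
    fun n => (hD_succ n).2.2
  refine ⟨⟨φ, h, ψ⟩, fun p hp => ?_⟩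
  obtain ⟨n, hpn⟩ := mem_iUnion.mp hp
  have hx : p.1 ∈ SX (Sn n) := mem_image_of_mem _ hpn
  rw [hD n p hpn, ← hφ n hx, ← hh n hx, ← hψ n (mem_image_of_mem _ hpn)]

/-- An increasing union of 2-nets satisfying the WEP satisfies the WEP. -/
theorem wep_increasing_union_of_twoNets
    (X Y : Set ℝ) (hX : X.Countable) (hY : Y.Countable)
    (hXpos : ∀ x ∈ X, 0 < x) (hYpos : ∀ y ∈ Y, 0 < y)
    (Sn : ℕ → Set (ℝ × ℝ)) (hSn : ∀ n, Sn n ⊆ X ×ˢ Y)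
    (hmono : Monotone Sn)
    (hnet : ∀ n, TwoNet (Sn n))
    (hwep : ∀ n, WEP (Sn n)) :
    WEP (⋃ n, Sn n) :=
  wep_increasing_union_of_twoNets_general Sn hmono hnet hwep
end
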